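/- arXiv:2503.10128 — 7 statements merged into one kernel-verified Lean document; each statement's English description precedes it below -/
import Mathlib

section
/- Let X be a reflexive Banach space, Y a Banach space, 1 ≤ p < ∞, and T = (T₁,…,T_d), S = (S₁,…,S_d) compact-operator tuples viewed as operators X → ℓ_p^d(Y). Suppose z⁰ ∈ 𝔽^d satisfies dist(T, 𝔽^d S) = ‖T − z⁰S‖ and T⁰ := T − z⁰S attains its norm exactly at {αx : |α| = 1} for some unit vector x (e.g., T⁰ is smooth). Then dist(T_j x, 𝔽 S_j x) = ‖T_j x − z_j⁰ S_j x‖ for every j, and dist(T, 𝔽^d S)^p = Σ_{j=1}^d dist(T_j x, 𝔽 S_j x)^p. -/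
open scoped ENNReal
open Filter Metric NormedSpace Topology

set_option linter.unusedSectionVars false

/-- The tuple operator `x ↦ (T₁x, …, T_d x)` into the `ℓ_p` direct sum. -/
noncomputable def tupleOpP {𝕜 : Type*} [RCLike 𝕜] {X Y : Type*} [NormedAddCommGroup X]
    [NormedSpace 𝕜 X] [NormedAddCommGroup Y] [NormedSpace 𝕜 Y] {d : ℕ} (p : ℝ≥0∞)
    [Fact (1 ≤ p)] (Tc : Fin d → (X →L[𝕜] Y)) : X →L[𝕜] PiLp p (fun _ : Fin d => Y) :=
  ((PiLp.continuousLinearEquiv p 𝕜 (fun _ : Fin d => Y)).symm :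
      (∀ _ : Fin d, Y) →L[𝕜] PiLp p (fun _ : Fin d => Y)).comp (ContinuousLinearMap.pi Tc)

section Aux

variable {𝕜 : Type*} [RCLike 𝕜] {X Z : Type*} [NormedAddCommGroup X]
    [NormedSpace 𝕜 X] [NormedAddCommGroup Z] [NormedSpace 𝕜 Z]

/-- Reflexivity: bounded sequences have weak limit points along any ultrafilter. -/
lemma exists_weak_limit (hrefl : Function.Surjective (NormedSpace.inclusionInDoubleDual 𝕜 X))
    (U : Ultrafilter ℕ) (x : ℕ → X) (hb : ∀ n, ‖x n‖ ≤ 1) :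
    ∃ x₀ : X, ‖x₀‖ ≤ 1 ∧ ∀ f : StrongDual 𝕜 X, Tendsto (fun n => f (x n)) U (𝓝 (f x₀)) := by
  set J := NormedSpace.inclusionInDoubleDual 𝕜 X with hJ
  have hJnorm : ∀ y : X, ‖J y‖ = ‖y‖ := fun y =>
    (NormedSpace.inclusionInDoubleDualLi (𝕜 := 𝕜) (E := X)).norm_map y
  set S : Set (WeakDual 𝕜 (StrongDual 𝕜 X)) := WeakDual.toStrongDual ⁻¹' Metric.closedBall (0 : StrongDual 𝕜 (StrongDual 𝕜 X)) 1 with hS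
  have hScomp : IsCompact S := WeakDual.isCompact_closedBall (𝕜 := 𝕜) (E := StrongDual 𝕜 X) 0 1
  set g : ℕ → WeakDual 𝕜 (StrongDual 𝕜 X) := fun n => StrongDual.toWeakDual (J (x n)) with hg
  have hgS : ∀ n, g n ∈ S := by
    intro n
    simp only [hS, Set.mem_preimage, Metric.mem_closedBall, dist_zero_right]
    exact (dist_zero_right (J (x n))).trans_le (by exact (hJnorm (x n)).trans_le (hb n))
  obtain ⟨ξ, hξS, hξ⟩ := hScomp.ultrafilter_le_nhds (U.map g)
    (by
      rw [Filter.le_principal_iff, Ultrafilter.mem_coe, Ultrafilter.mem_map]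
      exact Filter.univ_mem' hgS)
  obtain ⟨x₀, hx₀⟩ := hrefl (WeakDual.toStrongDual ξ)
  refine ⟨x₀, ?_, ?_⟩
  · have : ‖J x₀‖ ≤ 1 := by
      rw [hx₀]
      exact (dist_zero_right (WeakDual.toStrongDual ξ)).symm.trans_le (by exact hξS)
    rwa [hJnorm] at this
  · intro f
    have hcont : Continuous fun φ : WeakDual 𝕜 (StrongDual 𝕜 X) => φ f := WeakDual.eval_continuous f
    have h1 : Tendsto (fun n => g n f) U (𝓝 (ξ f)) := (hcont.tendsto ξ).comp hξ
    have h2 : ∀ n, g n f = f (x n) := fun n => rfl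
    have h3 : ξ f = f x₀ := by
      have : (WeakDual.toStrongDual ξ : StrongDual 𝕜 (StrongDual 𝕜 X)) f = J x₀ f := by rw [hx₀]
      exact this
    simpa [h2, h3] using h1

/-- Compact operators send weak convergence (along an ultrafilter, bounded) to norm
convergence. -/
lemma compact_tendsto (T : X →L[𝕜] Z) (hT : IsCompactOperator T) (U : Ultrafilter ℕ)
    (x : ℕ → X) (hb : ∀ n, ‖x n‖ ≤ 1) (x₀ : X)
    (hw : ∀ f : StrongDual 𝕜 X, Tendsto (fun n => f (x n)) U (𝓝 (f x₀))) :
    Tendsto (fun n => T (x n)) U (𝓝 (T x₀)) := by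
  obtain ⟨K, hK, hKsub⟩ := hT.image_closedBall_subset_compact 1
  have hmem : ∀ n, T (x n) ∈ K := fun n =>
    hKsub ⟨x n, by simpa [Metric.mem_closedBall, dist_zero_right] using hb n, rfl⟩
  obtain ⟨y, _, hy⟩ := hK.ultrafilter_le_nhds (U.map fun n => T (x n))
    (by
      rw [Filter.le_principal_iff, Ultrafilter.mem_coe, Ultrafilter.mem_map]
      exact Filter.univ_mem' hmem)
  have hyt : Tendsto (fun n => T (x n)) U (𝓝 y) := hy
  have hyT : y = T x₀ := by
    have h1 : ∀ g : StrongDual 𝕜 Z, g y = g (T x₀) := by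
      intro g
      have t1 : Tendsto (fun n => g (T (x n))) U (𝓝 (g y)) := (g.continuous.tendsto y).comp hyt
      have t2 : Tendsto (fun n => g (T (x n))) U (𝓝 (g (T x₀))) := by
        simpa using hw (g.comp T)
      exact tendsto_nhds_unique t1 t2
    rw [← sub_eq_zero]
    exact NormedSpace.eq_zero_of_forall_dual_eq_zero 𝕜 fun g => by
      rw [map_sub, h1 g, sub_self]
  exact hyT ▸ hyt

/-- Key lemma (Sain–Paul style): if `T` is Birkhoff–James orthogonal to all scalar multiples of
`A`, both compact, `X` reflexive, and `T` attains its norm exactly on `{αx}`, then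
`Tx ⊥_B Ax`. -/
lemma key_lemma (hrefl : Function.Surjective (NormedSpace.inclusionInDoubleDual 𝕜 X))
    (T A : X →L[𝕜] Z) (hTc : IsCompactOperator T) (hAc : IsCompactOperator A)
    (hBJ : ∀ c : 𝕜, ‖T‖ ≤ ‖T + c • A‖) (x : X) (hx : ‖x‖ = 1)
    (hM : {y : X | ‖y‖ = 1 ∧ ‖T y‖ = ‖T‖} = {y : X | ∃ α : 𝕜, ‖α‖ = 1 ∧ y = α • x})
    (lam : 𝕜) : ‖T x‖ ≤ ‖T x + lam • A x‖ := by
  rcases eq_or_ne T 0 with rfl | hT0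
  · simp
  have hTpos : 0 < ‖T‖ := norm_pos_iff.mpr hT0
  -- choose near-norming vectors for T + (lam/(n+1)) A
  set c : ℕ → 𝕜 := fun n => (((n+1 : ℕ) : 𝕜))⁻¹ * lam with hc
  have hcnorm : ∀ n : ℕ, ‖c n‖ = ((n:ℝ)+1)⁻¹ * ‖lam‖ := by
    intro n
    rw [hc]
    simp only [norm_mul, norm_inv, RCLike.norm_natCast]
    push_cast
    ring
  have hex : ∀ n : ℕ, ∃ xn : X, ‖xn‖ ≤ 1 ∧
      ‖T + c n • A‖ - ((n : ℝ) + 1)⁻¹ ^ 2 < ‖(T + c n • A) xn‖ := by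
    intro n
    have hlt : ‖T + c n • A‖ - ((n : ℝ) + 1)⁻¹ ^ 2 < ‖T + c n • A‖ := by
      have : (0:ℝ) < ((n : ℝ) + 1)⁻¹ ^ 2 := by positivity
      linarith
    obtain ⟨xn, h1, h2⟩ := (T + c n • A).exists_lt_apply_of_lt_opNorm hlt
    exact ⟨xn, h1.le, h2⟩
  choose xs hxs1 hxs2 using hex
  set U : Ultrafilter ℕ := Ultrafilter.of Filter.atTop with hU
  have hUle : (U : Filter ℕ) ≤ Filter.atTop := Ultrafilter.of_le _
  obtain ⟨x₀, hx₀1, hx₀w⟩ := exists_weak_limit hrefl U xs hxs1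
  have hTt : Tendsto (fun n => T (xs n)) U (𝓝 (T x₀)) := compact_tendsto T hTc U xs hxs1 x₀ hx₀w
  have hAt : Tendsto (fun n => A (xs n)) U (𝓝 (A x₀)) := compact_tendsto A hAc U xs hxs1 x₀ hx₀w
  have hAle : ∀ n, ‖A (xs n)‖ ≤ ‖A‖ := by
    intro n
    calc ‖A (xs n)‖ ≤ ‖A‖ * ‖xs n‖ := A.le_opNorm _
    _ ≤ ‖A‖ * 1 := by nlinarith [hxs1 n, norm_nonneg A]
    _ = ‖A‖ := mul_one _
  have hanorm' : ∀ n : ℕ, ‖T (xs n)‖ ≤ ‖T‖ := by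
    intro n
    calc ‖T (xs n)‖ ≤ ‖T‖ * ‖xs n‖ := T.le_opNorm _
    _ ≤ ‖T‖ * 1 := by nlinarith [hxs1 n, norm_nonneg T]
    _ = ‖T‖ := mul_one _
  have hanorm : ∀ n : ℕ, ‖T‖ - ((n:ℝ)+1)⁻¹ ^ 2 - ((n:ℝ)+1)⁻¹ * (‖lam‖ * ‖A‖) ≤ ‖T (xs n)‖ := by
    intro n
    have h1 : ‖T‖ - ((n:ℝ)+1)⁻¹ ^ 2 < ‖(T + c n • A) (xs n)‖ :=
      lt_of_le_of_lt (by linarith [hBJ (c n)]) (hxs2 n)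
    have h2 : ‖(T + c n • A) (xs n)‖ ≤ ‖T (xs n)‖ + ((n:ℝ)+1)⁻¹ * (‖lam‖ * ‖A‖) := by
      have heq : (T + c n • A) (xs n) = T (xs n) + c n • A (xs n) := by simp
      rw [heq]
      refine (norm_add_le _ _).trans ?_
      have h3 : ‖c n • A (xs n)‖ ≤ ((n:ℝ)+1)⁻¹ * (‖lam‖ * ‖A‖) := by
        rw [norm_smul, hcnorm n, mul_assoc]
        have h0 : (0:ℝ) ≤ ((n:ℝ)+1)⁻¹ := by positivity
        exact mul_le_mul_of_nonneg_left
          (mul_le_mul_of_nonneg_left (hAle n) (norm_nonneg lam)) h0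
      linarith
    linarith
  -- convexity estimate
  have hconv : ∀ n : ℕ, ‖T‖ - ((n:ℝ)+1)⁻¹ - ((n:ℝ)+1)⁻¹ ≤ ‖T (xs n) + lam • A (xs n)‖ := by
    intro n
    set m : ℝ := (n:ℝ) + 1 with hm
    have hmpos : (0:ℝ) < m := by positivity
    set mk : 𝕜 := ((n+1 : ℕ) : 𝕜) with hmk
    have hmknorm : ‖mk‖ = m := by rw [hmk, RCLike.norm_natCast]; push_cast [hm]; ring
    have hmkne : mk ≠ 0 := by
      rw [hmk]
      exact Nat.cast_ne_zero.mpr (Nat.succ_ne_zero n)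
    set u := T (xs n) with hu
    set v := lam • A (xs n) with hv
    have heval : (T + c n • A) (xs n) = u + mk⁻¹ • v := by
      simp only [ContinuousLinearMap.add_apply, ContinuousLinearMap.smul_apply, hc, hu, hv,
        smul_smul, hmk]
    have hBn : ‖T‖ - m⁻¹ ^ 2 < ‖u + mk⁻¹ • v‖ := by
      rw [← heval]
      have := hxs2 n
      rw [← hm] at this
      exact lt_of_le_of_lt (by linarith [hBJ (c n)]) this
    have hid : mk • (u + mk⁻¹ • v) = (u + v) + (mk - 1) • u := by
      rw [smul_add, smul_smul, mul_inv_cancel₀ hmkne, one_smul]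
      module
    have hmk1 : ‖mk - 1‖ = m - 1 := by
      rw [hmk]
      have : ((n+1 : ℕ) : 𝕜) - 1 = ((n : ℕ) : 𝕜) := by push_cast; ring
      rw [this, RCLike.norm_natCast, hm]
      ring
    have h3 : m * ‖u + mk⁻¹ • v‖ ≤ ‖u + v‖ + (m - 1) * ‖u‖ := by
      calc m * ‖u + mk⁻¹ • v‖ = ‖mk • (u + mk⁻¹ • v)‖ := by rw [norm_smul, hmknorm]
      _ = ‖(u + v) + (mk - 1) • u‖ := by rw [hid]
      _ ≤ ‖u + v‖ + ‖(mk - 1) • u‖ := norm_add_le _ _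
      _ = ‖u + v‖ + (m - 1) * ‖u‖ := by rw [norm_smul, hmk1]
    have h4 : m * (‖T‖ - m⁻¹ ^ 2) ≤ ‖u + v‖ + (m - 1) * ‖T‖ := by
      have hu1 : ‖u‖ ≤ ‖T‖ := hanorm' n
      have hm1 : (1:ℝ) ≤ m := by rw [hm]; have := Nat.cast_nonneg (α := ℝ) n; linarith
      nlinarith [hBn]
    have h6 : m * m⁻¹ ^ 2 = m⁻¹ := by field_simp
    nlinarith [h4]
  -- limits
  have hinv0 : Tendsto (fun n : ℕ => ((n:ℝ)+1)⁻¹) Filter.atTop (𝓝 0) :=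
    tendsto_one_div_add_atTop_nhds_zero_nat.congr (by intro n; rw [one_div])
  have hTlim : ‖T x₀‖ = ‖T‖ := by
    have hn : Tendsto (fun n => ‖T (xs n)‖) U (𝓝 ‖T x₀‖) :=
      (continuous_norm.tendsto _).comp hTt
    have hup : ‖T x₀‖ ≤ ‖T‖ := le_of_tendsto hn (Filter.Eventually.of_forall hanorm')
    have hlow : ‖T‖ ≤ ‖T x₀‖ := by
      have htend : Tendsto (fun n : ℕ => ‖T‖ - ((n:ℝ)+1)⁻¹ ^ 2 - ((n:ℝ)+1)⁻¹ * (‖lam‖ * ‖A‖))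
          Filter.atTop (𝓝 (‖T‖ - 0 - 0 * (‖lam‖ * ‖A‖))) :=
        (tendsto_const_nhds.sub (by simpa using hinv0.pow 2)).sub (hinv0.mul_const _)
      have htend' : Tendsto (fun n : ℕ => ‖T‖ - ((n:ℝ)+1)⁻¹ ^ 2 - ((n:ℝ)+1)⁻¹ * (‖lam‖ * ‖A‖))
          U (𝓝 ‖T‖) := by
        simpa using htend.mono_left hUle
      exact le_of_tendsto_of_tendsto' htend' hn hanorm
    linarith
  have hxnorm : ‖x₀‖ = 1 := by
    have h1 : ‖T x₀‖ ≤ ‖T‖ * ‖x₀‖ := T.le_opNorm _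
    rw [hTlim] at h1
    have : 1 ≤ ‖x₀‖ := by
      by_contra h
      push_neg at h
      nlinarith
    linarith
  have hx₀M : x₀ ∈ {y : X | ∃ α : 𝕜, ‖α‖ = 1 ∧ y = α • x} := by
    rw [← hM]; exact ⟨hxnorm, hTlim⟩
  obtain ⟨α, hα, hx₀eq⟩ := hx₀M
  have hsum : Tendsto (fun n => ‖T (xs n) + lam • A (xs n)‖) U (𝓝 ‖T x₀ + lam • A x₀‖) := by
    have : Tendsto (fun n => T (xs n) + lam • A (xs n)) U (𝓝 (T x₀ + lam • A x₀)) :=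
      hTt.add (hAt.const_smul lam)
    exact (continuous_norm.tendsto _).comp this
  have hge : ‖T‖ ≤ ‖T x₀ + lam • A x₀‖ := by
    have htend : Tendsto (fun n : ℕ => ‖T‖ - ((n:ℝ)+1)⁻¹ - ((n:ℝ)+1)⁻¹) U (𝓝 ‖T‖) := by
      have : Tendsto (fun n : ℕ => ‖T‖ - ((n:ℝ)+1)⁻¹ - ((n:ℝ)+1)⁻¹) Filter.atTop
          (𝓝 (‖T‖ - 0 - 0)) := (tendsto_const_nhds.sub hinv0).sub hinv0
      simpa using this.mono_left hUle
    exact le_of_tendsto_of_tendsto' htend hsum hconv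
  have heq : ‖T x₀ + lam • A x₀‖ = ‖T x + lam • A x‖ := by
    rw [hx₀eq]
    simp only [map_smul]
    rw [smul_comm lam α, ← smul_add, norm_smul, hα, one_mul]
  calc ‖T x‖ ≤ ‖T‖ := by
        calc ‖T x‖ ≤ ‖T‖ * ‖x‖ := T.le_opNorm _
        _ = ‖T‖ := by rw [hx, mul_one]
  _ ≤ ‖T x + lam • A x‖ := by rw [← heq]; exact hge

end Aux


section Tuple

variable {𝕜 : Type*} [RCLike 𝕜] {X Y : Type*} [NormedAddCommGroup X]
    [NormedSpace 𝕜 X] [NormedAddCommGroup Y] [NormedSpace 𝕜 Y] {d : ℕ} (p : ℝ≥0∞)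
    [Fact (1 ≤ p)]

lemma tupleOpP_apply (F : Fin d → (X →L[𝕜] Y)) (y : X) (i : Fin d) :
    (tupleOpP p F) y i = F i y := rfl

lemma tupleOpP_isCompact (F : Fin d → (X →L[𝕜] Y)) (h : ∀ i, IsCompactOperator ⇑(F i)) :
    IsCompactOperator ⇑(tupleOpP p F) := by
  have hpi : IsCompactOperator ⇑(ContinuousLinearMap.pi (R := 𝕜) F) := by
    choose K hK hKn using h
    refine ⟨Set.pi Set.univ K, isCompact_univ_pi hK, ?_⟩
    have : (ContinuousLinearMap.pi (R := 𝕜) F) ⁻¹' Set.pi Set.univ K = ⋂ i, F i ⁻¹' K i := by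
      ext y; simp [Set.mem_pi]
    rw [this]; exact Filter.iInter_mem.2 hKn
  exact hpi.continuous_comp
    (((PiLp.continuousLinearEquiv p 𝕜 (fun _ : Fin d => Y)).symm :
      (∀ _ : Fin d, Y) →L[𝕜] PiLp p (fun _ : Fin d => Y))).continuous

end Tuple


/-- `X` reflexive Banach, `Y` Banach, `1 ≤ p < ∞`, `T, S` compact tuples
`X → ℓ_p^d(Y)`.  If `z0` realizes `dist(T, 𝔽^d S)` and `T⁰ = T − z0S` attains its norm
exactly on `{αx : |α| = 1}` for a unit vector `x`, then
`dist(T_j x, 𝔽 S_j x) = ‖T_j x − z_j⁰ S_j x‖` for every `j`, and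
`dist(T, 𝔽^d S)^p = Σ_j dist(T_j x, 𝔽 S_j x)^p`. -/
theorem stmt10 {𝕜 : Type*} [RCLike 𝕜] {X Y : Type*} [NormedAddCommGroup X] [NormedSpace 𝕜 X]
    [CompleteSpace X] [NormedAddCommGroup Y] [NormedSpace 𝕜 Y] [CompleteSpace Y]
    (hrefl : Function.Surjective (NormedSpace.inclusionInDoubleDual 𝕜 X))
    {d : ℕ} (p : ℝ≥0∞) [Fact (1 ≤ p)] (hp : p ≠ ∞)
    (Tc Sc : Fin d → (X →L[𝕜] Y))
    (hTcpt : ∀ i, IsCompactOperator (Tc i)) (hScpt : ∀ i, IsCompactOperator (Sc i))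
    (z0 : Fin d → 𝕜)
    (hdist : Metric.infDist (tupleOpP p Tc)
        (Set.range fun z : Fin d → 𝕜 => tupleOpP p (fun i => z i • Sc i)) =
      ‖tupleOpP p (fun j => Tc j - z0 j • Sc j)‖)
    (x : X) (hx : ‖x‖ = 1)
    (hM : {y : X | ‖y‖ = 1 ∧
        ‖tupleOpP p (fun j => Tc j - z0 j • Sc j) y‖ =
          ‖tupleOpP p (fun j => Tc j - z0 j • Sc j)‖} =
      {y : X | ∃ α : 𝕜, ‖α‖ = 1 ∧ y = α • x}) :
    (∀ j, Metric.infDist (Tc j x) (Set.range fun lam : 𝕜 => lam • Sc j x) =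
        ‖Tc j x - z0 j • Sc j x‖) ∧
      (Metric.infDist (tupleOpP p Tc)
          (Set.range fun z : Fin d → 𝕜 => tupleOpP p (fun i => z i • Sc i))) ^ p.toReal =
        ∑ j, (Metric.infDist (Tc j x) (Set.range fun lam : 𝕜 => lam • Sc j x)) ^ p.toReal := by
  have hq : 0 < p.toReal := ENNReal.toReal_pos (by
      have : (1 : ℝ≥0∞) ≤ p := Fact.out
      intro h0; rw [h0] at this; exact absurd this (by simp)) hp
  set q := p.toReal with hqdef
  set T0 : X →L[𝕜] PiLp p (fun _ : Fin d => Y) := tupleOpP p (fun j => Tc j - z0 j • Sc j)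
    with hT0def
  -- x attains the norm of T0
  have hT0x : ‖T0 x‖ = ‖T0‖ := by
    have : x ∈ {y : X | ∃ α : 𝕜, ‖α‖ = 1 ∧ y = α • x} := ⟨1, by simp, (one_smul 𝕜 x).symm⟩
    rw [← hM] at this
    exact this.2
  -- norm powers over coordinates
  have hseq : ∀ w : PiLp p (fun _ : Fin d => Y), ‖w‖ ^ q = ∑ i, ‖w i‖ ^ q := by
    intro w
    have hS : (0:ℝ) ≤ ∑ i, ‖w i‖ ^ q :=
      Finset.sum_nonneg fun i _ => Real.rpow_nonneg (norm_nonneg _) _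
    rw [PiLp.norm_eq_sum hq w, ← Real.rpow_mul hS, one_div, inv_mul_cancel₀ hq.ne',
      Real.rpow_one]
  -- `T0` compact
  have hT0cpt : IsCompactOperator ⇑T0 := by
    refine tupleOpP_isCompact p _ fun i => ?_
    have := (hTcpt i).sub ((hScpt i).smul (z0 i))
    simpa using this
  -- the key orthogonality inequality, coordinatewise
  have hcoord : ∀ (j : Fin d) (lam : 𝕜),
      ‖Tc j x - z0 j • Sc j x‖ ≤ ‖Tc j x - lam • Sc j x‖ := by
    intro j lam
    set Aj : X →L[𝕜] PiLp p (fun _ : Fin d => Y) :=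
      tupleOpP p (fun i => if i = j then Sc j else 0) with hAjdef
    have hAjcpt : IsCompactOperator ⇑Aj := by
      refine tupleOpP_isCompact p _ fun i => ?_
      by_cases h : i = j
      · simpa [h] using hScpt j
      · simpa [h] using isCompactOperator_zero
    have hBJ : ∀ cc : 𝕜, ‖T0‖ ≤ ‖T0 + cc • Aj‖ := by
      intro cc
      set z' : Fin d → 𝕜 := Function.update z0 j (z0 j - cc) with hz'
      have hrepr : T0 + cc • Aj =
          tupleOpP p Tc - tupleOpP p (fun i => z' i • Sc i) := by
        refine ContinuousLinearMap.ext fun y => ?_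
        rw [WithLp.ext_iff]; funext i
        have h1 : (T0 + cc • Aj) y i = T0 y i + cc • (Aj y i) := rfl
        have h2 : (tupleOpP p Tc - tupleOpP p (fun i => z' i • Sc i)) y i =
            Tc i y - z' i • Sc i y := rfl
        rw [h1, h2, hT0def, hAjdef, tupleOpP_apply, tupleOpP_apply]
        by_cases h : i = j
        · subst h
          simp [hz', sub_smul]
          module
        · simp [h, hz', Function.update_of_ne h]
      have hmem : tupleOpP p (fun i => z' i • Sc i) ∈
          Set.range fun z : Fin d → 𝕜 => tupleOpP p (fun i => z i • Sc i) := ⟨z', rfl⟩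
      have hle := Metric.infDist_le_dist_of_mem (x := tupleOpP p Tc) hmem
      rw [hdist, dist_eq_norm, ← hrepr] at hle
      exact hle
    have hkey := key_lemma hrefl T0 Aj hT0cpt hAjcpt hBJ x hx hM (z0 j - lam)
    -- extract coordinate j
    set w : PiLp p (fun _ : Fin d => Y) := T0 x with hw
    set w' : PiLp p (fun _ : Fin d => Y) := T0 x + (z0 j - lam) • Aj x with hw'
    have hwi : ∀ i, w i = Tc i x - z0 i • Sc i x := fun i => rfl
    have hw'i : ∀ i, w' i = w i + (z0 j - lam) • ((if i = j then Sc j else 0) x) := fun i => rfl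
    have hw'ne : ∀ i, i ≠ j → w' i = w i := by
      intro i hij
      rw [hw'i i, if_neg hij]
      simp
    have hw'j : w' j = Tc j x - lam • Sc j x := by
      rw [hw'i j, if_pos rfl, hwi j]
      rw [sub_smul]
      module
    have hsum : ∑ i, ‖w i‖ ^ q ≤ ∑ i, ‖w' i‖ ^ q := by
      rw [← hseq, ← hseq]
      exact Real.rpow_le_rpow (norm_nonneg _) hkey hq.le
    have herase : ∑ i ∈ Finset.univ.erase j, ‖w i‖ ^ q
        = ∑ i ∈ Finset.univ.erase j, ‖w' i‖ ^ q := by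
      refine Finset.sum_congr rfl fun i hi => ?_
      rw [hw'ne i (Finset.mem_erase.1 hi).1]
    have h1 := Finset.add_sum_erase Finset.univ (fun i => ‖w i‖ ^ q) (Finset.mem_univ j)
    have h2 := Finset.add_sum_erase Finset.univ (fun i => ‖w' i‖ ^ q) (Finset.mem_univ j)
    have hjq : ‖w j‖ ^ q ≤ ‖w' j‖ ^ q := by
      simp only at h1 h2
      rw [← h1, ← h2, herase] at hsum
      linarith
    have := (Real.rpow_le_rpow_iff (norm_nonneg _) (norm_nonneg _) hq).1 hjq
    rw [hwi j, hw'j] at this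
    exact this
  constructor
  · intro j
    refine le_antisymm ?_ ?_
    · have := Metric.infDist_le_dist_of_mem
        (x := Tc j x) (y := z0 j • Sc j x)
        (s := Set.range fun lam : 𝕜 => lam • Sc j x) ⟨z0 j, rfl⟩
      rwa [dist_eq_norm] at this
    · by_contra h
      push_neg at h
      obtain ⟨y, hy, hlt⟩ := (Metric.infDist_lt_iff (s := Set.range fun lam : 𝕜 => lam • Sc j x)
          ⟨0 • Sc j x, ⟨0, rfl⟩⟩).1 h
      obtain ⟨lam, rfl⟩ := hy
      rw [dist_eq_norm] at hlt
      exact absurd hlt (not_lt.2 (hcoord j lam))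
  · have hWi : ∀ i, (T0 x) i = Tc i x - z0 i • Sc i x := fun i => rfl
    have hrw : ∀ j, Metric.infDist (Tc j x)
        (Set.range fun lam : 𝕜 => lam • Sc j x) = ‖Tc j x - z0 j • Sc j x‖ := by
      intro j
      refine le_antisymm ?_ ?_
      · have := Metric.infDist_le_dist_of_mem
          (x := Tc j x) (y := z0 j • Sc j x)
          (s := Set.range fun lam : 𝕜 => lam • Sc j x) ⟨z0 j, rfl⟩
        rwa [dist_eq_norm] at this
      · by_contra h
        push_neg at h
        obtain ⟨y, hy, hlt⟩ := (Metric.infDist_lt_iff (s := Set.range fun lam : 𝕜 => lam • Sc j x)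
          ⟨0 • Sc j x, ⟨0, rfl⟩⟩).1 h
        obtain ⟨lam, rfl⟩ := hy
        rw [dist_eq_norm] at hlt
        exact absurd hlt (not_lt.2 (hcoord j lam))
    rw [hdist, ← hT0x, hseq]
    refine Finset.sum_congr rfl fun i _ => ?_
    rw [hrw i, ← hWi i]
end

section
/- Let X be a reflexive Banach space, Y a Banach space, 1 ≤ p < ∞, and let T₁,…,T_d, S₁,…,S_d be compact operators from X to Y, with T, S : X → ℓ_p^d(Y) the associated tuples. Suppose each T_i is smooth, the norm attainment sets M_{T_i} have nonempty common intersection, and T_j ⊥_B S_j for every 1 ≤ j ≤ d. Then T ⊥_B 𝔽^d S, i.e., ‖T + zS‖ ≥ ‖T‖ for all z ∈ 𝔽^d. -/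
open scoped ENNReal Topology
open Filter

section Aux
variable {𝕜 : Type*} [RCLike 𝕜] {X Y : Type*} [NormedAddCommGroup X] [NormedSpace 𝕜 X]
    [NormedAddCommGroup Y] [NormedSpace 𝕜 Y]

lemma real_pointwise {A C : X →L[𝕜] Y} {x : X} (hx : ‖x‖ = 1) (hAx : ‖A x‖ = ‖A‖)
    (hs : ∃ r : ℝ, Tendsto (fun t : ℝ => (‖A + (t : 𝕜) • C‖ - ‖A‖) / t)
      (𝓝[{(0:ℝ)}ᶜ] 0) (𝓝 r))
    (ho : ∀ lam : 𝕜, ‖A + lam • C‖ ≥ ‖A‖) :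
    ∀ t : ℝ, ‖A x + (t : 𝕜) • C x‖ ≥ ‖A x‖ := by
  obtain ⟨r, hr⟩ := hs
  have hIoi : Tendsto (fun t : ℝ => (‖A + (t : 𝕜) • C‖ - ‖A‖) / t) (𝓝[>] (0:ℝ)) (𝓝 r) :=
    hr.mono_left (nhdsWithin_mono 0 (fun t ht => ne_of_gt ht))
  have hIio : Tendsto (fun t : ℝ => (‖A + (t : 𝕜) • C‖ - ‖A‖) / t) (𝓝[<] (0:ℝ)) (𝓝 r) :=
    hr.mono_left (nhdsWithin_mono 0 (fun t ht => ne_of_lt ht))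
  have hr0 : r = 0 := by
    have h1 : 0 ≤ r := by
      refine ge_of_tendsto hIoi ?_
      refine eventually_mem_nhdsWithin.mono (fun t ht => ?_)
      exact div_nonneg (sub_nonneg.2 (ho _)) (le_of_lt ht)
    have h2 : r ≤ 0 := by
      refine le_of_tendsto hIio ?_
      refine eventually_mem_nhdsWithin.mono (fun t ht => ?_)
      exact div_nonpos_of_nonneg_of_nonpos (sub_nonneg.2 (ho _)) (le_of_lt ht)
    linarith
  intro t₀
  by_contra hcon
  push_neg at hcon
  have ht₀ : t₀ ≠ 0 := by
    rintro rfl; simp at hcon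
  set c : ℝ := ‖A x‖ - ‖A x + (t₀ : 𝕜) • C x‖ with hc_def
  have hc : 0 < c := by simpa [hc_def] using hcon
  -- key convexity claim
  have claim : ∀ t : ℝ, t * t₀ < 0 → ‖A + (t : 𝕜) • C‖ ≥ ‖A‖ + c * (-t / t₀) := by
    intro t htt
    have hne : t₀ - t ≠ 0 := by
      rcases mul_neg_iff.1 htt with ⟨h1, h2⟩ | ⟨h1, h2⟩
      · linarith
      · linarith
    set lam : ℝ := t₀ / (t₀ - t) with hlam_def
    have hlam_pos : 0 < lam := by
      rcases mul_neg_iff.1 htt with ⟨h1, h2⟩ | ⟨h1, h2⟩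
      · exact div_pos_iff.2 (Or.inr ⟨h2, by linarith⟩)
      · exact div_pos_iff.2 (Or.inl ⟨h2, by linarith⟩)
    have hlam_lt : lam < 1 := by
      have : lam - 1 = t / (t₀ - t) := by
        have h : lam * (t₀ - t) = t₀ := by rw [hlam_def]; field_simp
        rw [eq_div_iff hne]; linear_combination h
      have hneg : t / (t₀ - t) < 0 := by
        rcases mul_neg_iff.1 htt with ⟨h1, h2⟩ | ⟨h1, h2⟩
        · exact div_neg_of_pos_of_neg h1 (by linarith)
        · exact div_neg_of_neg_of_pos h1 (by linarith)
      linarith [this ▸ hneg]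
    set a : 𝕜 := (lam : 𝕜)
    set b : 𝕜 := ((1 - lam : ℝ) : 𝕜)
    have hab1 : a + b = 1 := by push_cast [a, b]; ring
    have hab0 : a * (t : 𝕜) + b * (t₀ : 𝕜) = 0 := by
      have : lam * t + (1 - lam) * t₀ = 0 := by
        have h : lam * (t₀ - t) = t₀ := by rw [hlam_def]; field_simp
        linear_combination -h
      push_cast [a, b]
      exact_mod_cast congrArg (fun r : ℝ => (r : 𝕜)) this
    have hid : a • (A x + (t : 𝕜) • C x) + b • (A x + (t₀ : 𝕜) • C x) = A x := by
      have : a • (A x + (t : 𝕜) • C x) + b • (A x + (t₀ : 𝕜) • C x)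
          = (a + b) • A x + (a * (t : 𝕜) + b * (t₀ : 𝕜)) • C x := by
        rw [smul_add, smul_add, add_smul, add_smul, smul_smul, smul_smul]; abel
      rw [this, hab1, hab0, one_smul, zero_smul, add_zero]
    have htri : ‖A x‖ ≤ lam * ‖A x + (t : 𝕜) • C x‖ + (1 - lam) * ‖A x + (t₀ : 𝕜) • C x‖ := by
      calc ‖A x‖ = ‖a • (A x + (t : 𝕜) • C x) + b • (A x + (t₀ : 𝕜) • C x)‖ := by rw [hid]
        _ ≤ ‖a • (A x + (t : 𝕜) • C x)‖ + ‖b • (A x + (t₀ : 𝕜) • C x)‖ := norm_add_le _ _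
        _ = lam * ‖A x + (t : 𝕜) • C x‖ + (1 - lam) * ‖A x + (t₀ : 𝕜) • C x‖ := by
            rw [norm_smul, norm_smul]
            simp only [a, b, RCLike.norm_ofReal]
            rw [abs_of_pos hlam_pos, abs_of_pos (by linarith)]
    have hg : ‖A x + (t : 𝕜) • C x‖ ≥ ‖A x‖ + c * (-t / t₀) := by
      have h1 : ‖A x + (t₀ : 𝕜) • C x‖ = ‖A x‖ - c := by rw [hc_def]; ring
      rw [h1] at htri
      have hratio : (1 - lam) / lam = -t / t₀ := by
        field_simp [hlam_def]
        have h : lam * (t₀ - t) = t₀ := by rw [hlam_def]; field_simp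
        linear_combination -h
      have : lam * ‖A x + (t : 𝕜) • C x‖ ≥ lam * ‖A x‖ + (1 - lam) * c := by nlinarith
      have h2 : ‖A x + (t : 𝕜) • C x‖ ≥ ‖A x‖ + ((1 - lam) / lam) * c := by
        rw [ge_iff_le, ← sub_nonneg]
        have := sub_nonneg.2 this
        calc (0:ℝ) ≤ (lam * ‖A x + (t : 𝕜) • C x‖ - (lam * ‖A x‖ + (1 - lam) * c)) / lam :=
              div_nonneg this hlam_pos.le
          _ = ‖A x + (t : 𝕜) • C x‖ - (‖A x‖ + (1 - lam) / lam * c) := by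
              field_simp
      rw [hratio] at h2
      linarith [h2]
    calc ‖A + (t : 𝕜) • C‖ ≥ ‖(A + (t : 𝕜) • C) x‖ := by
          have := (A + (t : 𝕜) • C).le_opNorm x
          rw [hx, mul_one] at this; exact this
      _ = ‖A x + (t : 𝕜) • C x‖ := by simp
      _ ≥ ‖A x‖ + c * (-t / t₀) := hg
      _ = ‖A‖ + c * (-t / t₀) := by rw [hAx]
  rcases lt_or_gt_of_ne ht₀ with h0 | h0
  · -- t₀ < 0 : use t > 0
    have : (0:ℝ) ≥ -c / t₀ := by
      refine ge_of_tendsto (hr0 ▸ hIoi) ?_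
      refine eventually_mem_nhdsWithin.mono (fun t ht => ?_)
      have ht' : (0:ℝ) < t := ht
      have hcl := claim t (mul_neg_of_pos_of_neg ht' h0)
      rw [le_div_iff₀ ht']
      have : c * (-t / t₀) = (-c / t₀) * t := by ring
      linarith [this ▸ hcl]
    have : 0 < -c / t₀ := div_pos_of_neg_of_neg (by linarith) h0
    linarith
  · -- t₀ > 0 : use t < 0
    have : (0:ℝ) ≤ -c / t₀ := by
      refine le_of_tendsto (hr0 ▸ hIio) ?_
      refine eventually_mem_nhdsWithin.mono (fun t ht => ?_)
      have ht' : t < 0 := ht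
      have hcl := claim t (mul_neg_of_neg_of_pos ht' h0)
      rw [div_le_iff_of_neg ht']
      have : c * (-t / t₀) = (-c / t₀) * t := by ring
      linarith [this ▸ hcl]
    have : -c / t₀ < 0 := div_neg_of_neg_of_pos (by linarith) h0
    linarith



lemma pointwise_orth {A B : X →L[𝕜] Y} {x : X} (hx : ‖x‖ = 1) (hAx : ‖A x‖ = ‖A‖)
    (hs : ∀ C : X →L[𝕜] Y, ∃ r : ℝ, Tendsto (fun t : ℝ => (‖A + (t : 𝕜) • C‖ - ‖A‖) / t)
      (𝓝[{(0:ℝ)}ᶜ] 0) (𝓝 r))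
    (ho : ∀ lam : 𝕜, ‖A + lam • B‖ ≥ ‖A‖) :
    ∀ lam : 𝕜, ‖A x + lam • B x‖ ≥ ‖A x‖ := by
  intro lam
  rcases eq_or_ne lam 0 with rfl | hlam
  · simp
  set u : 𝕜 := (‖lam‖ : 𝕜)⁻¹ * lam with hu
  have hnorm_ne : ((‖lam‖ : ℝ) : 𝕜) ≠ 0 := by
    simp [norm_eq_zero, hlam]
  have key := real_pointwise (C := u • B) hx hAx (hs (u • B)) (fun m => by
    rw [smul_smul]; exact ho (m * u)) ‖lam‖
  have : ((‖lam‖ : ℝ) : 𝕜) • (u • B) x = lam • B x := by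
    simp only [ContinuousLinearMap.smul_apply, smul_smul, hu]
    rw [mul_inv_cancel_left₀ hnorm_ne]
  rwa [this] at key

end Aux

/-- `X` reflexive Banach, `Y` Banach, `1 ≤ p < ∞`, compact tuples `T, S`.
If each `T_i` is smooth (the operator norm is Gâteaux differentiable at `T_i`), the
norm attainment sets `M_{T_i}` have a common point, and `T_j ⊥_B S_j` for all `j`,
then `T ⊥_B 𝔽^d S`. -/
theorem stmt12 {𝕜 : Type*} [RCLike 𝕜] {X Y : Type*} [NormedAddCommGroup X] [NormedSpace 𝕜 X]
    [CompleteSpace X] [NormedAddCommGroup Y] [NormedSpace 𝕜 Y] [CompleteSpace Y]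
    (hrefl : Function.Surjective (NormedSpace.inclusionInDoubleDual 𝕜 X))
    {d : ℕ} (p : ℝ≥0∞) [Fact (1 ≤ p)] (hp : p ≠ ∞)
    (Tc Sc : Fin d → (X →L[𝕜] Y))
    (hTcpt : ∀ i, IsCompactOperator (Tc i)) (hScpt : ∀ i, IsCompactOperator (Sc i))
    (hsmooth : ∀ i, ∀ B : X →L[𝕜] Y, ∃ r : ℝ,
      Filter.Tendsto (fun t : ℝ => (‖Tc i + (t : 𝕜) • B‖ - ‖Tc i‖) / t)
        (nhdsWithin 0 {(0 : ℝ)}ᶜ) (nhds r))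
    (hM : ∃ x : X, ‖x‖ = 1 ∧ ∀ i, ‖Tc i x‖ = ‖Tc i‖)
    (horth : ∀ j, ∀ lam : 𝕜, ‖Tc j + lam • Sc j‖ ≥ ‖Tc j‖) :
    ∀ z : Fin d → 𝕜,
      ‖tupleOpP p (fun i => Tc i + z i • Sc i)‖ ≥ ‖tupleOpP p Tc‖ := by
  intro z
  obtain ⟨x, hx1, hxM⟩ := hM
  have hp1 : (1:ℝ≥0∞) ≤ p := Fact.out
  have hpr_pos : 0 < p.toReal :=
    ENNReal.toReal_pos (by intro h; rw [h] at hp1; simp at hp1) hp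
  set pr := p.toReal with hpr
  have hnorm_apply : ∀ (Tc' : Fin d → (X →L[𝕜] Y)) (y : X),
      ‖tupleOpP p Tc' y‖ = (∑ i, ‖Tc' i y‖ ^ pr) ^ (1 / pr) := by
    intro Tc' y
    rw [PiLp.norm_eq_sum hpr_pos]
    simp [tupleOpP, hpr]
  set C : ℝ := (∑ i, ‖Tc i‖ ^ pr) ^ (1 / pr) with hC
  have hCnn : 0 ≤ C := Real.rpow_nonneg
    (Finset.sum_nonneg fun i _ => Real.rpow_nonneg (norm_nonneg _) _) _
  have step1 : ‖tupleOpP p Tc‖ ≤ C := by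
    refine ContinuousLinearMap.opNorm_le_bound _ hCnn (fun y => ?_)
    rw [hnorm_apply]
    have h1 : (∑ i, ‖Tc i y‖ ^ pr) ≤ ∑ i, (‖Tc i‖ * ‖y‖) ^ pr :=
      Finset.sum_le_sum fun i _ =>
        Real.rpow_le_rpow (norm_nonneg _) ((Tc i).le_opNorm y) hpr_pos.le
    have h2 : (∑ i, (‖Tc i‖ * ‖y‖) ^ pr) = (∑ i, ‖Tc i‖ ^ pr) * ‖y‖ ^ pr := by
      rw [Finset.sum_mul]
      refine Finset.sum_congr rfl (fun i _ => ?_)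
      rw [Real.mul_rpow (norm_nonneg _) (norm_nonneg _)]
    calc (∑ i, ‖Tc i y‖ ^ pr) ^ (1 / pr)
        ≤ ((∑ i, ‖Tc i‖ ^ pr) * ‖y‖ ^ pr) ^ (1 / pr) := by
          rw [← h2]
          exact Real.rpow_le_rpow (Finset.sum_nonneg fun i _ =>
            Real.rpow_nonneg (norm_nonneg _) _) h1 (by positivity)
      _ = C * ‖y‖ := by
          rw [Real.mul_rpow (Finset.sum_nonneg fun i _ =>
            Real.rpow_nonneg (norm_nonneg _) _) (Real.rpow_nonneg (norm_nonneg _) _),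
            ← Real.rpow_mul (norm_nonneg y), mul_one_div_cancel hpr_pos.ne',
            Real.rpow_one, hC]
  have key : ∀ i, ‖(Tc i + z i • Sc i) x‖ ≥ ‖Tc i‖ := by
    intro i
    have := pointwise_orth hx1 (hxM i) (hsmooth i) (horth i) (z i)
    rw [hxM i] at this
    simpa using this
  have step3 : C ≤ ‖tupleOpP p (fun i => Tc i + z i • Sc i) x‖ := by
    rw [hnorm_apply]
    refine Real.rpow_le_rpow (Finset.sum_nonneg fun i _ =>
      Real.rpow_nonneg (norm_nonneg _) _) ?_ (by positivity)
    exact Finset.sum_le_sum fun i _ =>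
      Real.rpow_le_rpow (norm_nonneg _) (key i) hpr_pos.le
  have step2 : ‖tupleOpP p (fun i => Tc i + z i • Sc i) x‖
      ≤ ‖tupleOpP p (fun i => Tc i + z i • Sc i)‖ := by
    have := (tupleOpP p (fun i => Tc i + z i • Sc i)).le_opNorm x
    rwa [hx1, mul_one] at this
  linarith
end

section
/- Let X be a reflexive Banach space, Y a Banach space, 1 ≤ p < ∞, and T, S compact tuple operators X → ℓ_p^d(Y) with components T_i, S_i. Suppose ∩_{j=1}^d M_{T_j − z_j⁰S_j} ≠ ∅ where z⁰ ∈ 𝔽^d satisfies dist(T, 𝔽^d S) = ‖T − z⁰S‖. Then dist(T_j, 𝔽S_j) = ‖T_j − z_j⁰S_j‖ for all 1 ≤ j ≤ d, and dist(T, 𝔽^d S)^p = Σ_{j=1}^d dist(T_j, 𝔽S_j)^p. -/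
/-!
If one unit vector `x` norms every component `T_j - z⁰_j S_j`, it also norms the tuple, so
`‖T - z⁰S‖^p = Σ_j ‖T_j - z⁰_j S_j‖^p`. Changing only the `j`-th coefficient of `z⁰` to `λ`
cannot lower the `ℓ_p` distance, while `Σ_j ‖T_j - z_j S_j‖^p` bounds `‖T - zS‖^p` from above;
comparing the two sums, which differ only in the `j`-th term, gives
`‖T_j - z⁰_j S_j‖ ≤ ‖T_j - λ S_j‖`.
-/

open scoped ENNReal

theorem Finset.le_of_sum_le_sum_update {ι M : Type*} [Fintype ι] [DecidableEq ι]
    [AddCommMonoid M] [PartialOrder M] [IsOrderedCancelAddMonoid M] (f : ι → M) (j : ι) (b : M)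
    (h : ∑ i, f i ≤ ∑ i, Function.update f j b i) : f j ≤ b := by
  rw [Finset.sum_update_of_mem (Finset.mem_univ j),
    Finset.sum_eq_add_sum_sdiff_singleton_of_mem (Finset.mem_univ j)] at h
  exact le_of_add_le_add_right h

theorem Metric.infDist_eq_dist_of_forall_le {α : Type*} [PseudoMetricSpace α] {x y : α}
    {s : Set α} (hy : y ∈ s) (hle : ∀ z ∈ s, dist x y ≤ dist x z) :
    Metric.infDist x s = dist x y :=
  le_antisymm (Metric.infDist_le_dist_of_mem hy) ((Metric.le_infDist ⟨y, hy⟩).mpr hle)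

section tupleOpP

variable {𝕜 : Type*} [RCLike 𝕜] {X Y : Type*} [NormedAddCommGroup X] [NormedSpace 𝕜 X]
  [NormedAddCommGroup Y] [NormedSpace 𝕜 Y] {d : ℕ} (p : ℝ≥0∞) [Fact (1 ≤ p)]

theorem tupleOpP_sub (A B : Fin d → (X →L[𝕜] Y)) :
    tupleOpP p A - tupleOpP p B = tupleOpP p (fun i => A i - B i) :=
  rfl

theorem norm_tupleOpP_apply_rpow (hp : p ≠ ∞) (A : Fin d → (X →L[𝕜] Y)) (x : X) :
    ‖tupleOpP p A x‖ ^ p.toReal = ∑ j, ‖A j x‖ ^ p.toReal := by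
  have hq : 0 < p.toReal := p.toReal_pos_iff_ne_top.mpr hp
  rw [PiLp.norm_eq_sum hq, one_div, Real.rpow_inv_rpow (by positivity) hq.ne']
  rfl

theorem norm_tupleOpP_le (hp : p ≠ ∞) (A : Fin d → (X →L[𝕜] Y)) :
    ‖tupleOpP p A‖ ≤ (∑ j, ‖A j‖ ^ p.toReal) ^ p.toReal⁻¹ := by
  have hq : 0 < p.toReal := p.toReal_pos_iff_ne_top.mpr hp
  refine ContinuousLinearMap.opNorm_le_bound _ (by positivity) fun x => ?_
  rw [← Real.rpow_le_rpow_iff (norm_nonneg _) (by positivity) hq, norm_tupleOpP_apply_rpow p hp,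
    Real.mul_rpow (by positivity) (norm_nonneg _), Real.rpow_inv_rpow (by positivity) hq.ne',
    Finset.sum_mul]
  gcongr with j
  rw [← Real.mul_rpow (norm_nonneg _) (norm_nonneg _)]
  gcongr
  exact (A j).le_opNorm x

theorem norm_tupleOpP_rpow_le (hp : p ≠ ∞) (A : Fin d → (X →L[𝕜] Y)) :
    ‖tupleOpP p A‖ ^ p.toReal ≤ ∑ j, ‖A j‖ ^ p.toReal := by
  have hq : 0 < p.toReal := p.toReal_pos_iff_ne_top.mpr hp
  calc ‖tupleOpP p A‖ ^ p.toReal ≤ ((∑ j, ‖A j‖ ^ p.toReal) ^ p.toReal⁻¹) ^ p.toReal := by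
        gcongr
        exact norm_tupleOpP_le p hp A
    _ = ∑ j, ‖A j‖ ^ p.toReal := Real.rpow_inv_rpow (by positivity) hq.ne'

theorem norm_tupleOpP_rpow_eq_of_norm_apply_eq (hp : p ≠ ∞) {A : Fin d → (X →L[𝕜] Y)} {x : X}
    (hx : ‖x‖ = 1) (hxA : ∀ j, ‖A j x‖ = ‖A j‖) :
    ‖tupleOpP p A‖ ^ p.toReal = ∑ j, ‖A j‖ ^ p.toReal := by
  refine le_antisymm (norm_tupleOpP_rpow_le p hp A) ?_
  calc ∑ j, ‖A j‖ ^ p.toReal = ‖tupleOpP p A x‖ ^ p.toReal := by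
        simp only [norm_tupleOpP_apply_rpow p hp, hxA]
    _ ≤ ‖tupleOpP p A‖ ^ p.toReal := by
        gcongr
        exact (tupleOpP p A).unit_le_opNorm x hx.le

theorem norm_sub_smul_le_of_infDist_tupleOpP_eq (hp : p ≠ ∞) {T S : Fin d → (X →L[𝕜] Y)}
    {z₀ : Fin d → 𝕜}
    (hdist : Metric.infDist (tupleOpP p T)
        (Set.range fun z : Fin d → 𝕜 => tupleOpP p (fun i => z i • S i)) =
      ‖tupleOpP p (fun j => T j - z₀ j • S j)‖)
    (hsum : ‖tupleOpP p (fun j => T j - z₀ j • S j)‖ ^ p.toReal =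
      ∑ j, ‖T j - z₀ j • S j‖ ^ p.toReal) (j : Fin d) (c : 𝕜) :
    ‖T j - z₀ j • S j‖ ≤ ‖T j - c • S j‖ := by
  have hq : 0 < p.toReal := p.toReal_pos_iff_ne_top.mpr hp
  set z := Function.update z₀ j c
  have hmin : ‖tupleOpP p (fun j => T j - z₀ j • S j)‖ ≤
      ‖tupleOpP p (fun i => T i - z i • S i)‖ := by
    rw [← hdist]
    exact (Metric.infDist_le_dist_of_mem (Set.mem_range_self z)).trans_eq
      (by rw [dist_eq_norm, tupleOpP_sub])
  have hupdate : (fun i => ‖T i - z i • S i‖ ^ p.toReal) =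
      Function.update (fun i => ‖T i - z₀ i • S i‖ ^ p.toReal) j (‖T j - c • S j‖ ^ p.toReal) := by
    ext i
    rcases eq_or_ne i j with rfl | hij <;> simp [z, *]
  have hsum_le : ∑ i, ‖T i - z₀ i • S i‖ ^ p.toReal ≤
      ∑ i, Function.update (fun i => ‖T i - z₀ i • S i‖ ^ p.toReal) j
        (‖T j - c • S j‖ ^ p.toReal) i := by
    rw [← hupdate, ← hsum]
    exact (Real.rpow_le_rpow (norm_nonneg _) hmin hq.le).trans (norm_tupleOpP_rpow_le p hp _)
  exact (Real.rpow_le_rpow_iff (norm_nonneg _) (norm_nonneg _) hq).mp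
    (Finset.le_of_sum_le_sum_update _ j _ hsum_le)

end tupleOpP

theorem stmt13_general {𝕜 : Type*} [RCLike 𝕜] {X Y : Type*} [NormedAddCommGroup X] [NormedSpace 𝕜 X]
    [NormedAddCommGroup Y] [NormedSpace 𝕜 Y]
    {d : ℕ} (p : ℝ≥0∞) [Fact (1 ≤ p)] (hp : p ≠ ∞)
    (Tc Sc : Fin d → (X →L[𝕜] Y))
    (z0 : Fin d → 𝕜)
    (hdist : Metric.infDist (tupleOpP p Tc)
        (Set.range fun z : Fin d → 𝕜 => tupleOpP p (fun i => z i • Sc i)) =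
      ‖tupleOpP p (fun j => Tc j - z0 j • Sc j)‖)
    (hM : ∃ x : X, ‖x‖ = 1 ∧ ∀ j, ‖(Tc j - z0 j • Sc j) x‖ = ‖Tc j - z0 j • Sc j‖) :
    (∀ j, Metric.infDist (Tc j) (Set.range fun lam : 𝕜 => lam • Sc j) =
        ‖Tc j - z0 j • Sc j‖) ∧
      (Metric.infDist (tupleOpP p Tc)
          (Set.range fun z : Fin d → 𝕜 => tupleOpP p (fun i => z i • Sc i))) ^ p.toReal =
        ∑ j, (Metric.infDist (Tc j) (Set.range fun lam : 𝕜 => lam • Sc j)) ^ p.toReal := by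
  obtain ⟨x, hx, hxM⟩ := hM
  have hsum := norm_tupleOpP_rpow_eq_of_norm_apply_eq p hp hx hxM
  have hcomp : ∀ j, Metric.infDist (Tc j) (Set.range fun lam : 𝕜 => lam • Sc j) =
      ‖Tc j - z0 j • Sc j‖ := by
    intro j
    rw [← dist_eq_norm]
    refine Metric.infDist_eq_dist_of_forall_le (Set.mem_range_self _) ?_
    rintro _ ⟨c, rfl⟩
    simpa only [dist_eq_norm] using norm_sub_smul_le_of_infDist_tupleOpP_eq p hp hdist hsum j c
  refine ⟨hcomp, ?_⟩
  simp only [hdist, hsum, hcomp]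

/-- `X` reflexive Banach, `Y` Banach, `1 ≤ p < ∞`, compact tuples `T, S`.
If `z⁰` realizes `dist(T, 𝔽^d S)` and the norm attainment sets `M_{T_j − z_j⁰S_j}` have a
common point, then `dist(T_j, 𝔽S_j) = ‖T_j − z_j⁰S_j‖` for all `j`, and
`dist(T, 𝔽^d S)^p = Σ_j dist(T_j, 𝔽S_j)^p`. -/
theorem stmt13 {𝕜 : Type*} [RCLike 𝕜] {X Y : Type*} [NormedAddCommGroup X] [NormedSpace 𝕜 X]
    [CompleteSpace X] [NormedAddCommGroup Y] [NormedSpace 𝕜 Y] [CompleteSpace Y]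
    (hrefl : Function.Surjective (NormedSpace.inclusionInDoubleDual 𝕜 X))
    {d : ℕ} (p : ℝ≥0∞) [Fact (1 ≤ p)] (hp : p ≠ ∞)
    (Tc Sc : Fin d → (X →L[𝕜] Y))
    (hTcpt : ∀ i, IsCompactOperator (Tc i)) (hScpt : ∀ i, IsCompactOperator (Sc i))
    (z0 : Fin d → 𝕜)
    (hdist : Metric.infDist (tupleOpP p Tc)
        (Set.range fun z : Fin d → 𝕜 => tupleOpP p (fun i => z i • Sc i)) =
      ‖tupleOpP p (fun j => Tc j - z0 j • Sc j)‖)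
    (hM : ∃ x : X, ‖x‖ = 1 ∧ ∀ j, ‖(Tc j - z0 j • Sc j) x‖ = ‖Tc j - z0 j • Sc j‖) :
    (∀ j, Metric.infDist (Tc j) (Set.range fun lam : 𝕜 => lam • Sc j) =
        ‖Tc j - z0 j • Sc j‖) ∧
      (Metric.infDist (tupleOpP p Tc)
          (Set.range fun z : Fin d → 𝕜 => tupleOpP p (fun i => z i • Sc i))) ^ p.toReal =
        ∑ j, (Metric.infDist (Tc j) (Set.range fun lam : 𝕜 => lam • Sc j)) ^ p.toReal :=
  stmt13_general p hp Tc Sc z0 hdist hM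
end

section
/- Let X be a reflexive Banach space, Y a Banach space, 1 ≤ p < ∞, and T a compact tuple operator X → ℓ_p^d(Y) with components T_i such that ∩_{i=1}^d M_{T_i} ≠ ∅. If each T_i is a smooth point of K(X,Y) (the norm is Gâteaux differentiable at T_i), then T is a smooth point of K(X, ℓ_p^d(Y)). -/
open scoped ENNReal
open Filter Topology

private lemma hasDerivAt_of_squeeze {l f h : ℝ → ℝ} {r : ℝ}
    (hlf : ∀ t, l t ≤ f t) (hfh : ∀ t, f t ≤ h t)
    (hl0 : l 0 = f 0) (hh0 : f 0 = h 0)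
    (hl : HasDerivAt l r 0) (hh : HasDerivAt h r 0) : HasDerivAt f r 0 := by
  rw [hasDerivAt_iff_tendsto_slope] at hl hh ⊢
  rw [← nhdsLT_sup_nhdsGT, tendsto_sup] at hl hh ⊢
  obtain ⟨hl₁, hl₂⟩ := hl; obtain ⟨hh₁, hh₂⟩ := hh
  constructor
  · refine tendsto_of_tendsto_of_tendsto_of_le_of_le' hh₁ hl₁ ?_ ?_ <;>
    · filter_upwards [self_mem_nhdsWithin] with t ht
      simp only [Set.mem_Iio] at ht
      rw [slope_def_field, slope_def_field, sub_zero]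
      apply div_le_div_of_nonpos_of_le ht.le
      have := hlf t; have := hfh t; linarith
  · refine tendsto_of_tendsto_of_tendsto_of_le_of_le' hl₂ hh₂ ?_ ?_ <;>
    · filter_upwards [self_mem_nhdsWithin] with t ht
      simp only [Set.mem_Ioi] at ht
      rw [slope_def_field, slope_def_field, sub_zero]
      have h1 := hlf t; have h2 := hfh t
      apply div_le_div_of_nonneg_right (by linarith) ht.le

private lemma hasDerivAt_of_le {u g : ℝ → ℝ} {r : ℝ}
    (hug : ∀ t, u t ≤ g t) (h0 : u 0 = g 0)
    (hmid : ∀ t, 2 * u 0 ≤ u t + u (-t))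
    (hg : HasDerivAt g r 0) : HasDerivAt u r 0 := by
  have h1 : HasDerivAt (fun t : ℝ => g (-t)) (-r) 0 := by
    have := HasDerivAt.comp (𝕜 := ℝ) 0
      (show HasDerivAt g r ((fun t : ℝ => -t) 0) by simpa using hg) (hasDerivAt_neg 0)
    simpa [Function.comp_def] using this
  have hl : HasDerivAt (fun t : ℝ => 2 * g 0 - g (-t)) r 0 := by
    simpa using (hasDerivAt_const (0:ℝ) (2 * g 0)).fun_sub h1
  refine hasDerivAt_of_squeeze (l := fun t => 2 * g 0 - g (-t)) (h := g) ?_ hug ?_ h0 hl hg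
  · intro t
    have h2 := hmid t; have h3 := hug (-t)
    linarith [h0]
  · rw [neg_zero]
    linarith [h0]

private lemma norm_eq_zero_of_smooth_zero {𝕜 : Type*} [RCLike 𝕜] {X Y : Type*}
    [NormedAddCommGroup X] [NormedSpace 𝕜 X] [NormedAddCommGroup Y] [NormedSpace 𝕜 Y]
    (B : X →L[𝕜] Y) {r : ℝ}
    (hr : Filter.Tendsto (fun t : ℝ => (‖(t : 𝕜) • B‖ - 0) / t)
      (nhdsWithin 0 {(0 : ℝ)}ᶜ) (nhds r)) : ‖B‖ = 0 := by
  have hioi : 𝓝[Set.Ioi (0:ℝ)] 0 ≤ 𝓝[≠] (0:ℝ) :=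
    nhdsWithin_mono _ (fun x hx => ne_of_gt hx)
  have hiio : 𝓝[Set.Iio (0:ℝ)] 0 ≤ 𝓝[≠] (0:ℝ) :=
    nhdsWithin_mono _ (fun x hx => ne_of_lt hx)
  have heq : ∀ t : ℝ, (‖(t : 𝕜) • B‖ - 0) / t = (|t| * ‖B‖) / t := by
    intro t
    have hn : ‖(t:𝕜) • B‖ = ‖(t:𝕜)‖ * ‖B‖ :=
      norm_smul (α := 𝕜) (β := X →L[𝕜] Y) _ _
    rw [sub_zero, hn, RCLike.norm_ofReal]
  have h₁ : r = ‖B‖ := by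
    refine tendsto_nhds_unique (hr.mono_left hioi) ?_
    refine Tendsto.congr' ?_ tendsto_const_nhds
    filter_upwards [self_mem_nhdsWithin] with t ht
    have ht' : (0:ℝ) < t := ht
    have ht0 : t ≠ 0 := ht'.ne'
    rw [heq t, abs_of_pos ht']
    field_simp
  have h₂ : r = -‖B‖ := by
    refine tendsto_nhds_unique (hr.mono_left hiio) ?_
    refine Tendsto.congr' ?_ tendsto_const_nhds
    filter_upwards [self_mem_nhdsWithin] with t ht
    have ht' : t < (0:ℝ) := ht
    have ht0 : t ≠ 0 := ht'.ne
    rw [heq t, abs_of_neg ht']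
    field_simp
  linarith [h₁, h₂]


/-- `X` reflexive Banach, `Y` Banach, `1 ≤ p < ∞`, `T` a compact tuple with
`⋂ᵢ M_{T_i} ≠ ∅`.  If each `T_i` is a smooth point (the operator norm is Gâteaux
differentiable at `T_i`), then `T` is a smooth point of `K(X, ℓ_p^d(Y))`. -/
theorem stmt15 {𝕜 : Type*} [RCLike 𝕜] {X Y : Type*} [NormedAddCommGroup X] [NormedSpace 𝕜 X]
    [CompleteSpace X] [NormedAddCommGroup Y] [NormedSpace 𝕜 Y] [CompleteSpace Y]
    (hrefl : Function.Surjective (NormedSpace.inclusionInDoubleDual 𝕜 X))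
    {d : ℕ} (p : ℝ≥0∞) [Fact (1 ≤ p)] (hp : p ≠ ∞)
    (Tc : Fin d → (X →L[𝕜] Y)) (hTcpt : ∀ i, IsCompactOperator (Tc i))
    (hM : ∃ x : X, ‖x‖ = 1 ∧ ∀ i, ‖Tc i x‖ = ‖Tc i‖)
    (hsmooth : ∀ i, ∀ B : X →L[𝕜] Y, ∃ r : ℝ,
      Filter.Tendsto (fun t : ℝ => (‖Tc i + (t : 𝕜) • B‖ - ‖Tc i‖) / t)
        (nhdsWithin 0 {(0 : ℝ)}ᶜ) (nhds r)) :
    ∀ B : X →L[𝕜] PiLp p (fun _ : Fin d => Y), ∃ r : ℝ,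
      Filter.Tendsto (fun t : ℝ => (‖tupleOpP p Tc + (t : 𝕜) • B‖ - ‖tupleOpP p Tc‖) / t)
        (nhdsWithin 0 {(0 : ℝ)}ᶜ) (nhds r) := by
  intro B
  classical
  have hz0 : tupleOpP p Tc + ((0:ℝ):𝕜) • B = tupleOpP p Tc := by
    ext x
    simp
  obtain ⟨x₀, hx₀, hMx⟩ := hM
  have hp1 : (1:ℝ) ≤ p.toReal := by
    have h1 : (1:ℝ≥0∞) ≤ p := Fact.out
    simpa using ENNReal.toReal_mono hp h1
  have hp0 : (0:ℝ) < p.toReal := lt_of_lt_of_le one_pos hp1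
  set p' : ℝ := p.toReal with hp'
  set Bc : Fin d → (X →L[𝕜] Y) := fun i =>
    (ContinuousLinearMap.proj i).comp
      (((PiLp.continuousLinearEquiv p 𝕜 fun _ : Fin d => Y) :
        PiLp p (fun _ : Fin d => Y) →L[𝕜] (∀ _ : Fin d, Y)).comp B) with hBc
  set A : ℝ → Fin d → (X →L[𝕜] Y) := fun t i => Tc i + (t:𝕜) • Bc i with hA
  have hop : ∀ t : ℝ, tupleOpP p Tc + (t:𝕜) • B = tupleOpP p (A t) := fun t => rfl
  have hnorm : ∀ (C : Fin d → (X →L[𝕜] Y)) (x : X),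
      ‖tupleOpP p C x‖ = (∑ i, ‖C i x‖ ^ p') ^ (1/p') := by
    intro C x; rw [PiLp.norm_eq_sum hp0]; rfl
  have hupper : ∀ (C : Fin d → (X →L[𝕜] Y)),
      ‖tupleOpP p C‖ ≤ (∑ i, ‖C i‖ ^ p') ^ (1/p') := by
    intro C
    refine ContinuousLinearMap.opNorm_le_bound _ (by positivity) fun x => ?_
    rw [hnorm]
    have h1 : ∑ i, ‖C i x‖ ^ p' ≤ ∑ i, (‖C i‖ * ‖x‖) ^ p' :=
      Finset.sum_le_sum fun i _ =>
        Real.rpow_le_rpow (norm_nonneg _) ((C i).le_opNorm x) hp0.le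
    have h2 : ∑ i, (‖C i‖ * ‖x‖) ^ p' = (∑ i, ‖C i‖ ^ p') * ‖x‖ ^ p' := by
      rw [Finset.sum_mul]
      exact Finset.sum_congr rfl fun i _ =>
        Real.mul_rpow (norm_nonneg _) (norm_nonneg _)
    calc (∑ i, ‖C i x‖ ^ p') ^ (1/p')
        ≤ ((∑ i, ‖C i‖ ^ p') * ‖x‖ ^ p') ^ (1/p') := by
          apply Real.rpow_le_rpow (by positivity) (h2 ▸ h1) (by positivity)
      _ = (∑ i, ‖C i‖ ^ p') ^ (1/p') * ‖x‖ := by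
          rw [Real.mul_rpow (by positivity) (by positivity), one_div,
            Real.rpow_rpow_inv (norm_nonneg x) hp0.ne']
  have hlower : ∀ (C : Fin d → (X →L[𝕜] Y)),
      (∑ i, ‖C i x₀‖ ^ p') ^ (1/p') ≤ ‖tupleOpP p C‖ := by
    intro C
    have h := (tupleOpP p C).le_opNorm x₀
    rw [hnorm, hx₀, mul_one] at h
    exact h
  set g : Fin d → ℝ → ℝ := fun i t => ‖Tc i + (t:𝕜) • Bc i‖ with hgdef
  set u : Fin d → ℝ → ℝ := fun i t => ‖Tc i x₀ + (t:𝕜) • Bc i x₀‖ with hudef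
  have hg0 : ∀ i, g i 0 = ‖Tc i‖ := by intro i; simp [hgdef]
  have hu0 : ∀ i, u i 0 = ‖Tc i‖ := by intro i; simp [hudef, hMx i]
  choose r hr using fun i => hsmooth i (Bc i)
  have hgd : ∀ i, HasDerivAt (g i) (r i) 0 := by
    intro i
    rw [hasDerivAt_iff_tendsto_slope]
    have hs : slope (g i) 0 = fun t => (g i t - ‖Tc i‖)/t := by
      funext t; rw [slope_def_field, sub_zero, hg0 i]
    rw [hs]
    exact hr i
  have hud : ∀ i, HasDerivAt (u i) (r i) 0 := by
    intro i
    refine hasDerivAt_of_le (g := g i) ?_ ?_ ?_ (hgd i)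
    · intro t
      have h1 : u i t = ‖(Tc i + (t:𝕜) • Bc i) x₀‖ := by simp [hudef]
      rw [h1]
      calc ‖(Tc i + (t:𝕜) • Bc i) x₀‖ ≤ ‖Tc i + (t:𝕜) • Bc i‖ * ‖x₀‖ :=
            ContinuousLinearMap.le_opNorm _ _
        _ = g i t := by rw [hx₀, mul_one]
    · rw [hu0, hg0]
    · intro t
      have hkey : (Tc i x₀ + (t:𝕜) • Bc i x₀) + (Tc i x₀ + ((-t:ℝ):𝕜) • Bc i x₀)
          = Tc i x₀ + Tc i x₀ := by
        push_cast
        module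
      have htri := norm_add_le (Tc i x₀ + (t:𝕜) • Bc i x₀) (Tc i x₀ + ((-t:ℝ):𝕜) • Bc i x₀)
      rw [hkey] at htri
      have h2 : ‖Tc i x₀ + Tc i x₀‖ = 2 * ‖Tc i x₀‖ := by
        rw [← two_smul 𝕜 (Tc i x₀), norm_smul]
        simp
      rw [h2] at htri
      have h3 : u i 0 = ‖Tc i x₀‖ := by simp [hudef]
      rw [h3]
      exact htri
  rcases eq_or_lt_of_le (Finset.sum_nonneg (fun i (_ : i ∈ Finset.univ) =>
      Real.rpow_nonneg (norm_nonneg (Tc i)) p')) with hSz | hSpos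
  · -- degenerate case : all ‖Tc i‖ = 0
    have hTz : ∀ i, ‖Tc i‖ = 0 := by
      intro i
      have h := (Finset.sum_eq_zero_iff_of_nonneg (fun i _ =>
        Real.rpow_nonneg (norm_nonneg (Tc i)) p')).mp hSz.symm i (Finset.mem_univ i)
      have := (Real.rpow_eq_zero (norm_nonneg (Tc i)) hp0.ne').mp h
      exact this
    have hBz : ∀ i, ‖Bc i‖ = 0 := by
      intro i
      have hTc : Tc i = 0 := norm_eq_zero.mp (hTz i)
      obtain ⟨r', hr'⟩ := hsmooth i (Bc i)
      rw [hTc] at hr'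
      apply norm_eq_zero_of_smooth_zero (𝕜 := 𝕜) (Bc i) (r := r')
      simpa using hr'
    have hzero : ∀ t : ℝ, ‖tupleOpP p Tc + (t:𝕜) • B‖ = 0 := by
      intro t
      refine le_antisymm ?_ (norm_nonneg _)
      rw [hop t]
      refine le_trans (hupper (A t)) (le_of_eq ?_)
      have hAz : ∀ i, ‖A t i‖ = 0 := by
        intro i
        refine le_antisymm ?_ (norm_nonneg _)
        calc ‖Tc i + (t:𝕜) • Bc i‖ ≤ ‖Tc i‖ + ‖(t:𝕜) • Bc i‖ := norm_add_le _ _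
          _ = 0 := by
              rw [hTz i, show ‖(t:𝕜) • Bc i‖ = ‖(t:𝕜)‖ * ‖Bc i‖ from
                norm_smul (α := 𝕜) (β := X →L[𝕜] Y) _ _, hBz i]
              ring
      rw [show (∑ i, ‖A t i‖ ^ p') = 0 from Finset.sum_eq_zero fun i _ => by
        rw [hAz i]; exact Real.zero_rpow hp0.ne']
      exact Real.zero_rpow (by positivity)
    refine ⟨0, ?_⟩
    have hT0 : ‖tupleOpP p Tc‖ = 0 := by
      have h := hzero 0
      rw [hz0] at h
      exact h
    refine Tendsto.congr (fun t => ?_) (tendsto_const_nhds (x := (0:ℝ)))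
    rw [hzero t, hT0]
    simp
  · -- main case : ∑ ‖Tc i‖ ^ p' > 0
    set S : ℝ := ∑ i, ‖Tc i‖ ^ p' with hSdef
    set r₀ : ℝ := (∑ i, r i * p' * ‖Tc i‖ ^ (p' - 1)) * (1/p') * S ^ (1/p' - 1) with hr₀def
    refine ⟨r₀, ?_⟩
    have hinnerh : HasDerivAt (fun t => ∑ i, g i t ^ p')
        (∑ i, r i * p' * ‖Tc i‖ ^ (p'-1)) 0 := by
      have h := HasDerivAt.fun_sum (u := Finset.univ)
        (A := fun i t => g i t ^ p') (A' := fun i => r i * p' * (g i 0) ^ (p'-1))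
        (fun i _ => (hgd i).rpow_const (Or.inr hp1))
      simpa only [hg0] using h
    have hinnerl : HasDerivAt (fun t => ∑ i, u i t ^ p')
        (∑ i, r i * p' * ‖Tc i‖ ^ (p'-1)) 0 := by
      have h := HasDerivAt.fun_sum (u := Finset.univ)
        (A := fun i t => u i t ^ p') (A' := fun i => r i * p' * (u i 0) ^ (p'-1))
        (fun i _ => (hud i).rpow_const (Or.inr hp1))
      simpa only [hu0] using h
    have houterh : HasDerivAt (fun t => (∑ i, g i t ^ p') ^ (1/p')) r₀ 0 := by
      have hne : (∑ i, g i 0 ^ p') ≠ 0 := by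
        simp only [hg0]; exact hSpos.ne'
      have h := hinnerh.rpow_const (p := 1/p') (Or.inl hne)
      simp only [hg0] at h
      exact h
    have houterl : HasDerivAt (fun t => (∑ i, u i t ^ p') ^ (1/p')) r₀ 0 := by
      have hne : (∑ i, u i 0 ^ p') ≠ 0 := by
        simp only [hu0]; exact hSpos.ne'
      have h := hinnerl.rpow_const (p := 1/p') (Or.inl hne)
      simp only [hu0] at h
      exact h
    have hlef : ∀ t : ℝ, (∑ i, u i t ^ p') ^ (1/p') ≤ ‖tupleOpP p Tc + (t:𝕜) • B‖ := by
      intro t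
      rw [hop t]
      exact hlower (A t)
    have hfle : ∀ t : ℝ, ‖tupleOpP p Tc + (t:𝕜) • B‖ ≤ (∑ i, g i t ^ p') ^ (1/p') := by
      intro t
      rw [hop t]
      exact hupper (A t)
    have hl0 : (∑ i, u i 0 ^ p') ^ (1/p') = S ^ (1/p') := by simp only [hu0]; rfl
    have hh0 : (∑ i, g i 0 ^ p') ^ (1/p') = S ^ (1/p') := by simp only [hg0]; rfl
    have hf0 : ‖tupleOpP p Tc + ((0:ℝ):𝕜) • B‖ = S ^ (1/p') := by
      refine le_antisymm (hh0 ▸ hfle 0) (hl0 ▸ hlef 0)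
    have hfd : HasDerivAt (fun t : ℝ => ‖tupleOpP p Tc + (t:𝕜) • B‖) r₀ 0 := by
      refine hasDerivAt_of_squeeze (l := fun t => (∑ i, u i t ^ p')^(1/p'))
        (h := fun t => (∑ i, g i t ^ p')^(1/p')) hlef hfle ?_ ?_ houterl houterh
      · show (∑ i, u i 0 ^ p')^(1/p') = ‖tupleOpP p Tc + ((0:ℝ):𝕜) • B‖
        rw [hl0, hf0]
      · show ‖tupleOpP p Tc + ((0:ℝ):𝕜) • B‖ = (∑ i, g i 0 ^ p')^(1/p')
        rw [hh0, hf0]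
    have hslope := hasDerivAt_iff_tendsto_slope.1 hfd
    refine Tendsto.congr (fun t => ?_) hslope
    rw [slope_def_field, sub_zero]
    congr 2
    rw [hz0]
end

section
/- Let X be a reflexive and strictly convex Banach space, and let T, S ∈ K(X, ℓ_∞^d) be given by T x = (f₁(x),…,f_d(x)) and S x = (g₁(x),…,g_d(x)) for functionals f_i, g_i ∈ X*. Then dist(T, 𝔽^d S) = max_{1≤i≤d} ‖f_i restricted to ker(g_i)‖. -/
set_option maxHeartbeats 1000000

open ContinuousLinearMap

/-- Each component norm is bounded by the norm of the `pi` map. -/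
lemma norm_le_norm_pi {𝕜 : Type*} [RCLike 𝕜] {X : Type*} [NormedAddCommGroup X]
    [NormedSpace 𝕜 X] {d : ℕ} (h : Fin d → (X →L[𝕜] 𝕜)) (i : Fin d) :
    ‖h i‖ ≤ ‖ContinuousLinearMap.pi h‖ := by
  refine (h i).opNorm_le_bound (norm_nonneg _) fun x => ?_
  calc ‖h i x‖ ≤ ‖ContinuousLinearMap.pi h x‖ :=
      norm_le_pi_norm (ContinuousLinearMap.pi h x) i
    _ ≤ ‖ContinuousLinearMap.pi h‖ * ‖x‖ := le_opNorm _ _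

/-- Lower bound: the restricted norm is at most `‖f - c • g‖` for any `c`. -/
lemma restr_le {𝕜 : Type*} [RCLike 𝕜] {X : Type*} [NormedAddCommGroup X]
    [NormedSpace 𝕜 X] (f g : X →L[𝕜] 𝕜) (c : 𝕜) :
    ‖f.comp (LinearMap.ker (g : X →ₗ[𝕜] 𝕜)).subtypeL‖ ≤ ‖f - c • g‖ := by
  have h1 : f.comp (LinearMap.ker (g : X →ₗ[𝕜] 𝕜)).subtypeL = (f - c • g).comp (LinearMap.ker (g : X →ₗ[𝕜] 𝕜)).subtypeL := by
    ext x
    simp [LinearMap.mem_ker.mp x.2]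
  rw [h1]
  calc ‖(f - c • g).comp (LinearMap.ker (g : X →ₗ[𝕜] 𝕜)).subtypeL‖
      ≤ ‖f - c • g‖ * ‖(LinearMap.ker (g : X →ₗ[𝕜] 𝕜)).subtypeL‖ := opNorm_comp_le _ _
    _ ≤ ‖f - c • g‖ * 1 :=
        mul_le_mul_of_nonneg_left (LinearMap.ker (g : X →ₗ[𝕜] 𝕜)).norm_subtypeL_le (norm_nonneg _)
    _ = ‖f - c • g‖ := mul_one _

/-- Hahn–Banach: there exists `c` attaining the restricted norm. -/
lemma exists_attain {𝕜 : Type*} [RCLike 𝕜] {X : Type*} [NormedAddCommGroup X]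
    [NormedSpace 𝕜 X] (f g : X →L[𝕜] 𝕜) :
    ∃ c : 𝕜, ‖f - c • g‖ = ‖f.comp (LinearMap.ker (g : X →ₗ[𝕜] 𝕜)).subtypeL‖ := by
  obtain ⟨h, hext, hnorm⟩ :=
    exists_extension_norm_eq (LinearMap.ker (g : X →ₗ[𝕜] 𝕜)) (f.comp (LinearMap.ker (g : X →ₗ[𝕜] 𝕜)).subtypeL)
  have hker : ∀ x, g x = 0 → f x = h x := by
    intro x hx
    have := hext ⟨x, hx⟩
    simpa using this.symm
  by_cases hg : g = 0
  · refine ⟨0, ?_⟩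
    have hfh : f = h := by
      ext x
      exact hker x (by simp [hg])
    have h0 : f - (0 : 𝕜) • g = f := by ext x; simp
    rw [h0, ← hnorm, hfh]
  · obtain ⟨x₀, hx₀⟩ : ∃ x₀, g x₀ ≠ 0 := by
      by_contra hall
      push_neg at hall
      exact hg (ContinuousLinearMap.ext fun x => by simp [hall x])
    refine ⟨(f x₀ - h x₀) / g x₀, ?_⟩
    have key : f - ((f x₀ - h x₀) / g x₀) • g = h := by
      ext x
      have hmem : g (x - (g x / g x₀) • x₀) = 0 := by
        simp [div_mul_cancel₀, hx₀]
      have := hker _ hmem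
      simp only [map_sub, map_smul, smul_eq_mul] at this
      have hfx : f x = g x / g x₀ * (f x₀ - h x₀) + h x := by
        field_simp at this ⊢
        ring_nf at this ⊢
        linear_combination this
      simp only [ContinuousLinearMap.sub_apply, ContinuousLinearMap.smul_apply, smul_eq_mul]
      rw [hfx]
      ring
    rw [key, hnorm]

/-- `X` a reflexive strictly convex Banach space, and
`T, S ∈ K(X, ℓ_∞^d)` given by `Tx = (f₁(x),…,f_d(x))`, `Sx = (g₁(x),…,g_d(x))`
for functionals `f_i, g_i ∈ X*`.  Then
`dist(T, 𝔽^d S) = max_i ‖f_i |_{ker g_i}‖`.  Here `ℓ_∞^d = 𝕜^d` with the sup norm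
(the Pi norm), and `‖f_i |_{ker g_i}‖` is the norm of `f_i` composed with the
inclusion of `ker g_i`. -/
theorem stmt16 {𝕜 : Type*} [RCLike 𝕜] {X : Type*} [NormedAddCommGroup X] [NormedSpace 𝕜 X]
    [NormedSpace ℝ X] [IsScalarTower ℝ 𝕜 X] [CompleteSpace X] [StrictConvexSpace ℝ X]
    (hrefl : Function.Surjective (NormedSpace.inclusionInDoubleDual 𝕜 X))
    {d : ℕ} (hd : 0 < d) (f g : Fin d → (X →L[𝕜] 𝕜)) :
    Metric.infDist (ContinuousLinearMap.pi f : X →L[𝕜] (Fin d → 𝕜))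
        (Set.range fun z : Fin d → 𝕜 => ContinuousLinearMap.pi fun i => z i • g i) =
      ⨆ i, ‖(f i).comp (LinearMap.ker (g i : X →ₗ[𝕜] 𝕜)).subtypeL‖ := by
  haveI : Nonempty (Fin d) := ⟨⟨0, hd⟩⟩
  set a : Fin d → ℝ := fun i => ‖(f i).comp (LinearMap.ker (g i : X →ₗ[𝕜] 𝕜)).subtypeL‖ with ha
  have hbdd : BddAbove (Set.range a) := Set.finite_range a |>.bddAbove
  have hpisub : ∀ z : Fin d → 𝕜,
      ContinuousLinearMap.pi f - ContinuousLinearMap.pi (fun i => z i • g i)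
        = ContinuousLinearMap.pi (fun i => f i - z i • g i) := by
    intro z; ext x i; simp
  apply le_antisymm
  · -- choose attaining c
    choose c hc using fun i => exists_attain (f i) (g i)
    refine le_trans (Metric.infDist_le_dist_of_mem ⟨c, rfl⟩) ?_
    rw [dist_eq_norm, hpisub c]
    refine le_trans (norm_pi_le_of_le (C := ⨆ i, a i) (fun i => ?_) ?_) le_rfl
    · rw [hc i]
      exact le_ciSup hbdd i
    · refine le_ciSup_of_le hbdd ⟨0, hd⟩ ?_
      rw [ha]
      positivity
  · by_contra hlt
    push_neg at hlt
    obtain ⟨y, ⟨z, rfl⟩, hy⟩ :=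
      (Metric.infDist_lt_iff ⟨_, Set.mem_range_self 0⟩).mp hlt
    refine absurd hy (not_lt.mpr ?_)
    refine ciSup_le fun i => ?_
    calc a i ≤ ‖f i - z i • g i‖ := restr_le (f i) (g i) (z i)
        _ ≤ ‖ContinuousLinearMap.pi (fun i => f i - z i • g i)‖ :=
            norm_le_norm_pi (fun j => f j - z j • g j) i
        _ = dist (ContinuousLinearMap.pi f) (ContinuousLinearMap.pi fun i => z i • g i) := by
            rw [dist_eq_norm, hpisub z]
end

section
/- Let X be a normed space over 𝔽, x ∈ S_X, and H a hyperplane through 0 with x ⊥_B H (i.e., ‖x + h‖ ≥ ‖x‖ for all h ∈ H), so that X = 𝔽x ⊕ H. Let A : X → Y be a bounded operator with ‖Ax‖ = ‖A‖, and for j ≥ 1 define T_j(αx + h) = αAx + (1/(j+1))Ah. Then ‖T_j‖ = ‖A‖ and x belongs to the norm attainment set of T_j, i.e., ‖T_j x‖ = ‖T_j‖. -/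
/-- `X` a normed space over `𝕜`, `x` a unit vector, `H` a hyperplane through
`0` with `x ⊥_B H` and `X = 𝕜x ⊕ H`.  If `A : X → Y` is bounded with `‖Ax‖ = ‖A‖` and
`T_j(αx + h) = αAx + (1/(j+1))Ah` for `j ≥ 1`, then `‖T_j‖ = ‖A‖` and `x` lies in the
norm attainment set of `T_j`, i.e. `‖T_j x‖ = ‖T_j‖`. -/
theorem stmt18 {𝕜 : Type*} [RCLike 𝕜] {X Y : Type*} [NormedAddCommGroup X] [NormedSpace 𝕜 X]
    [NormedAddCommGroup Y] [NormedSpace 𝕜 Y]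
    (x : X) (hx : ‖x‖ = 1) (H : Submodule 𝕜 X) (hxH : x ∉ H)
    (horth : ∀ h ∈ H, ∀ lam : 𝕜, ‖x + lam • h‖ ≥ ‖x‖)
    (hdecomp : ∀ v : X, ∃ (α : 𝕜) (h : X), h ∈ H ∧ v = α • x + h)
    (A : X →L[𝕜] Y) (hA : ‖A x‖ = ‖A‖)
    (j : ℕ) (hj : 1 ≤ j) (T : X →L[𝕜] Y)
    (hT : ∀ (α : 𝕜), ∀ h ∈ H, T (α • x + h) = α • A x + ((j : 𝕜) + 1)⁻¹ • A h) :
    ‖T‖ = ‖A‖ ∧ ‖T x‖ = ‖T‖ := by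
  have hTx : T x = A x := by
    have := hT 1 0 H.zero_mem
    simpa using this
  set c : 𝕜 := ((j : 𝕜) + 1)⁻¹ with hc
  have hcnorm : ‖c‖ = ((j : ℝ) + 1)⁻¹ := by
    rw [hc, norm_inv]
    have : ((j : 𝕜) + 1) = (((j + 1 : ℕ) : ℝ) : 𝕜) := by push_cast; ring
    rw [this, RCLike.norm_ofReal]
    rw [abs_of_nonneg (by positivity)]
    push_cast; ring
  have h1cnorm : ‖1 - c‖ = 1 - ((j : ℝ) + 1)⁻¹ := by
    have hne : ((j : 𝕜) + 1) ≠ 0 := Nat.cast_add_one_ne_zero j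
    have : (1 : 𝕜) - c = (j : 𝕜) * ((j : 𝕜) + 1)⁻¹ := by
      rw [hc]; field_simp; ring
    rw [this, norm_mul, norm_inv]
    have hj' : ‖(j : 𝕜)‖ = (j : ℝ) := RCLike.norm_natCast j
    have hj1 : ‖(j : 𝕜) + 1‖ = (j : ℝ) + 1 := by
      have : ((j : 𝕜) + 1) = (((j + 1 : ℕ) : ℝ) : 𝕜) := by push_cast; ring
      rw [this, RCLike.norm_ofReal, abs_of_nonneg (by positivity)]
      push_cast; ring
    rw [hj', hj1]
    have hpos : (0 : ℝ) < (j : ℝ) + 1 := by positivity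
    field_simp; ring
  have habs : ∀ (α : 𝕜) (h : X), h ∈ H → ‖α‖ ≤ ‖α • x + h‖ := by
    intro α h hh
    rcases eq_or_ne α 0 with rfl | hα
    · simp [norm_nonneg]
    · have : α • x + h = α • (x + α⁻¹ • h) := by
        rw [smul_add, smul_smul, mul_inv_cancel₀ hα, one_smul]
      rw [this, norm_smul]
      have := horth h hh α⁻¹
      rw [hx] at this
      nlinarith [norm_nonneg α, norm_pos_iff.mpr hα]
  have key : ∀ v : X, ‖T v‖ ≤ ‖A‖ * ‖v‖ := by
    intro v
    obtain ⟨α, h, hh, rfl⟩ := hdecomp v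
    rw [hT α h hh]
    have hrw : α • A x + c • A h = c • A (α • x + h) + (1 - c) • (α • A x) := by
      rw [map_add, map_smul]
      module
    rw [hrw]
    have h1 : ‖c • A (α • x + h)‖ ≤ ((j : ℝ) + 1)⁻¹ * (‖A‖ * ‖α • x + h‖) := by
      rw [norm_smul, hcnorm]
      exact mul_le_mul_of_nonneg_left (A.le_opNorm _) (by positivity)
    have h2 : ‖(1 - c) • (α • A x)‖ ≤ (1 - ((j : ℝ) + 1)⁻¹) * (‖A‖ * ‖α • x + h‖) := by
      rw [norm_smul, h1cnorm, norm_smul]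
      have hle : ‖α‖ * ‖A x‖ ≤ ‖A‖ * ‖α • x + h‖ := by
        rw [hA]
        calc ‖α‖ * ‖A‖ ≤ ‖α • x + h‖ * ‖A‖ :=
              mul_le_mul_of_nonneg_right (habs α h hh) (norm_nonneg _)
          _ = ‖A‖ * ‖α • x + h‖ := mul_comm _ _
      have hnn : (0 : ℝ) ≤ 1 - ((j : ℝ) + 1)⁻¹ := by
        have : ((j : ℝ) + 1)⁻¹ ≤ 1 := by
          rw [inv_le_one_iff₀]; right; linarith [Nat.cast_nonneg (α := ℝ) j]
        linarith
      exact mul_le_mul_of_nonneg_left hle hnn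
    calc ‖c • A (α • x + h) + (1 - c) • (α • A x)‖
        ≤ ‖c • A (α • x + h)‖ + ‖(1 - c) • (α • A x)‖ := norm_add_le _ _
      _ ≤ ((j : ℝ) + 1)⁻¹ * (‖A‖ * ‖α • x + h‖)
          + (1 - ((j : ℝ) + 1)⁻¹) * (‖A‖ * ‖α • x + h‖) := add_le_add h1 h2
      _ = ‖A‖ * ‖α • x + h‖ := by ring
  have hle : ‖T‖ ≤ ‖A‖ := T.opNorm_le_bound (norm_nonneg A) key
  have hge : ‖A‖ ≤ ‖T‖ := by
    calc ‖A‖ = ‖T x‖ := by rw [hTx, hA]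
      _ ≤ ‖T‖ * ‖x‖ := T.le_opNorm x
      _ = ‖T‖ := by rw [hx, mul_one]
  have hTA : ‖T‖ = ‖A‖ := le_antisymm hle hge
  exact ⟨hTA, by rw [hTx, hA, hTA]⟩
end

section
/- For 1 < m < ∞ and 1 ≤ n ≤ d, define T_n : ℓ_m^d → ℓ_m^d by T_n(x) = (x₁, x₂/(n+1), …, x_{n−1}/(n+1), x_n, x_{n+1}/(n+1), …, x_d/(n+1)) (coordinates 1 and n unchanged, all others scaled by 1/(n+1)). Then ‖T_n‖ = 1 and the norm attainment set of T_n is span{e₁, e_n} ∩ S_{ℓ_m^d}; in particular, ∩_{n=1}^d M_{T_n} = {α e₁ : |α| = 1}. -/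
open scoped ENNReal

/-- on `ℓ_m^d` (`1 < m < ∞`), the operator `T_n` fixing coordinates `1` and
`n` and scaling the others by `1/(n+1)` (here `n : Fin d` is the 0-based index, so the
scale factor is `(n+2)⁻¹`) has `‖T_n‖ = 1`, its norm attainment set is
`span{e₁, e_n} ∩ S_{ℓ_m^d}`, and `⋂ₙ M_{T_n} = {α e₁ : |α| = 1}`. -/
theorem stmt19 {𝕜 : Type*} [RCLike 𝕜] {d : ℕ} [NeZero d] (m : ℝ≥0∞) [Fact (1 ≤ m)]
    (hm1 : 1 < m) (hm2 : m ≠ ∞)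
    (T : Fin d → (PiLp m (fun _ : Fin d => 𝕜) →L[𝕜] PiLp m (fun _ : Fin d => 𝕜)))
    (hT : ∀ (n : Fin d) (x : PiLp m (fun _ : Fin d => 𝕜)) (k : Fin d),
      T n x k = if k = 0 ∨ k = n then x k else (((n : ℕ) : 𝕜) + 2)⁻¹ * x k) :
    (∀ n, ‖T n‖ = 1) ∧
    (∀ n, {x : PiLp m (fun _ : Fin d => 𝕜) | ‖x‖ = 1 ∧ ‖T n x‖ = ‖T n‖} =
      ((Submodule.span 𝕜
          ({(WithLp.equiv m (Fin d → 𝕜)).symm (Pi.single 0 1),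
            (WithLp.equiv m (Fin d → 𝕜)).symm (Pi.single n 1)} :
            Set (PiLp m (fun _ : Fin d => 𝕜))) : Submodule 𝕜 _) : Set _) ∩
        {x | ‖x‖ = 1}) ∧
    (⋂ n, {x : PiLp m (fun _ : Fin d => 𝕜) | ‖x‖ = 1 ∧ ‖T n x‖ = ‖T n‖}) =
      {y : PiLp m (fun _ : Fin d => 𝕜) | ∃ α : 𝕜, ‖α‖ = 1 ∧
        y = α • (WithLp.equiv m (Fin d → 𝕜)).symm (Pi.single 0 1)} := by
  classical
  set p := m.toReal with hpdef
  have hp1 : 1 < p := by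
    have := (ENNReal.toReal_lt_toReal (by simp) hm2).mpr hm1
    simpa using this
  have hp : 0 < p := lt_trans one_pos hp1
  set e0 : PiLp m (fun _ : Fin d => 𝕜) :=
    (WithLp.equiv m (Fin d → 𝕜)).symm (Pi.single 0 1) with he0
  have he0k : ∀ k : Fin d, e0 k = if k = 0 then 1 else 0 := by
    intro k
    rw [he0, WithLp.equiv_symm_apply, PiLp.toLp_apply]
    by_cases h : k = 0
    · subst h; simp
    · simp [h, Pi.single_eq_of_ne h]
  have he0norm : ‖e0‖ = 1 := by
    rw [he0, WithLp.equiv_symm_apply, PiLp.norm_toLp_single, norm_one]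
  -- norm of the scaling constant
  have hc : ∀ n : Fin d, ‖(((n : ℕ) : 𝕜) + 2)⁻¹‖ = (((n : ℕ) : ℝ) + 2)⁻¹ := by
    intro n
    rw [norm_inv]
    congr 1
    have : (((n : ℕ) : 𝕜) + 2) = (((n : ℕ) + 2 : ℕ) : 𝕜) := by push_cast; ring
    rw [this, RCLike.norm_natCast]
    push_cast; ring
  have hclt : ∀ n : Fin d, ‖(((n : ℕ) : 𝕜) + 2)⁻¹‖ < 1 := by
    intro n
    rw [hc]
    rw [inv_lt_one_iff₀]
    right
    have : (0:ℝ) ≤ ((n : ℕ) : ℝ) := Nat.cast_nonneg _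
    linarith
  -- coordinatewise bound
  have hcoord : ∀ n (x : PiLp m (fun _ : Fin d => 𝕜)) k, ‖T n x k‖ ≤ ‖x k‖ := by
    intro n x k
    rw [hT]
    by_cases h : k = 0 ∨ k = n
    · simp [h]
    · rw [if_neg h, norm_mul]
      calc ‖(((n : ℕ) : 𝕜) + 2)⁻¹‖ * ‖x k‖ ≤ 1 * ‖x k‖ := by
            apply mul_le_mul_of_nonneg_right (le_of_lt (hclt n)) (norm_nonneg _)
        _ = ‖x k‖ := one_mul _
  have hle : ∀ n (x : PiLp m (fun _ : Fin d => 𝕜)), ‖T n x‖ ≤ ‖x‖ := by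
    intro n x
    rw [PiLp.norm_eq_sum hp, PiLp.norm_eq_sum hp]
    gcongr with k
    exact hcoord n x k
  -- T n fixes vectors supported on {0, n}
  have hfix : ∀ n (x : PiLp m (fun _ : Fin d => 𝕜)),
      (∀ k, k ≠ 0 → k ≠ n → x k = 0) → T n x = x := by
    intro n x hx
    ext k
    rw [hT]
    by_cases h : k = 0 ∨ k = n
    · simp [h]
    · push_neg at h
      rw [if_neg (by tauto), hx k h.1 h.2, mul_zero]
  have hTe0 : ∀ n, T n e0 = e0 := by
    intro n
    apply hfix
    intro k hk0 _
    rw [he0k, if_neg hk0]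
  -- operator norms
  have hnorm : ∀ n, ‖T n‖ = 1 := by
    intro n
    apply le_antisymm
    · exact ContinuousLinearMap.opNorm_le_bound _ zero_le_one
        (fun x => by simpa using hle n x)
    · have h := (T n).le_opNorm e0
      rw [hTe0 n, he0norm, mul_one] at h
      exact h
  -- characterization of equality
  have hchar : ∀ n (x : PiLp m (fun _ : Fin d => 𝕜)),
      ‖T n x‖ = ‖x‖ ↔ ∀ k, k ≠ 0 → k ≠ n → x k = 0 := by
    intro n x
    constructor
    · intro h k hk0 hkn
      rw [PiLp.norm_eq_sum hp, PiLp.norm_eq_sum hp] at h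
      have hsum : ∑ j, ‖T n x j‖ ^ p = ∑ j, ‖x j‖ ^ p := by
        have := congrArg (· ^ p) h
        simpa only [← hpdef, one_div, Real.rpow_inv_rpow (Finset.sum_nonneg fun j _ =>
          Real.rpow_nonneg (norm_nonneg _) _) hp.ne'] using this
      have hterm := (Finset.sum_eq_sum_iff_of_le
        (fun j _ => Real.rpow_le_rpow (norm_nonneg _) (hcoord n x j) hp.le)).mp hsum
        k (Finset.mem_univ k)
      by_contra hxk
      have hxk' : 0 < ‖x k‖ := norm_pos_iff.mpr hxk
      have hTk : ‖T n x k‖ = ‖(((n : ℕ) : 𝕜) + 2)⁻¹‖ * ‖x k‖ := by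
        rw [hT, if_neg (by tauto), norm_mul]
      have hlt : ‖T n x k‖ < ‖x k‖ := by
        rw [hTk]
        calc ‖(((n : ℕ) : 𝕜) + 2)⁻¹‖ * ‖x k‖ < 1 * ‖x k‖ :=
              mul_lt_mul_of_pos_right (hclt n) hxk'
          _ = ‖x k‖ := one_mul _
      have := Real.rpow_lt_rpow (norm_nonneg _) hlt hp
      rw [hterm] at this
      exact lt_irrefl _ this
    · intro h
      rw [hfix n x h]
  have hsmulk : ∀ (α : 𝕜) (x : PiLp m (fun _ : Fin d => 𝕜)) (k : Fin d),
      (α • x) k = α * x k := fun _ _ _ => rfl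
  have haddk : ∀ (x y : PiLp m (fun _ : Fin d => 𝕜)) (k : Fin d),
      (x + y) k = x k + y k := fun _ _ _ => rfl
  refine ⟨hnorm, ?_, ?_⟩
  · -- norm attainment set
    intro n
    ext x
    simp only [Set.mem_setOf_eq, Set.mem_inter_iff, SetLike.mem_coe, hnorm n]
    have hTx : ‖x‖ = 1 → (‖T n x‖ = 1 ↔ ‖T n x‖ = ‖x‖) := fun hx => by rw [hx]
    constructor
    · rintro ⟨hx1, hx2⟩
      refine ⟨?_, hx1⟩
      have hsupp := (hchar n x).mp ((hTx hx1).mp hx2)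
      rw [Submodule.mem_span_pair]
      refine ⟨x 0, if n = 0 then 0 else x n, ?_⟩
      ext k
      rw [haddk, hsmulk, hsmulk, he0k]; dsimp only [WithLp.equiv_symm_apply, PiLp.toLp_apply]
      by_cases hk0 : k = 0
      · subst hk0
        by_cases hn : n = 0
        · simp [hn]
        · rw [if_pos rfl, Pi.single_eq_of_ne (Ne.symm hn), if_neg hn]
          ring
      · by_cases hkn : k = n
        · subst hkn
          rw [if_neg hk0, Pi.single_eq_same, if_neg hk0]
          ring
        · rw [if_neg hk0, Pi.single_eq_of_ne hkn, hsupp k hk0 hkn]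
          by_cases hn : n = 0 <;> simp [hn]
    · rintro ⟨hmem, hx1⟩
      refine ⟨hx1, (hTx hx1).mpr ?_⟩
      rw [hchar n x]
      rw [Submodule.mem_span_pair] at hmem
      obtain ⟨a, b, rfl⟩ := hmem
      intro k hk0 hkn
      rw [haddk, hsmulk, hsmulk, he0k, if_neg hk0, WithLp.equiv_symm_apply, PiLp.toLp_apply,
        Pi.single_eq_of_ne hkn]
      ring
  · -- intersection
    ext y
    simp only [Set.mem_iInter, Set.mem_setOf_eq]
    constructor
    · intro h
      obtain ⟨hy1, hy2⟩ := h 0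
      rw [hnorm 0] at hy2
      have hsupp := (hchar 0 y).mp (by rw [hy2, hy1])
      have hy : y = y 0 • e0 := by
        ext k
        rw [hsmulk, he0k]
        by_cases hk0 : k = 0
        · subst hk0; simp
        · rw [if_neg hk0, hsupp k hk0 hk0, mul_zero]
      refine ⟨y 0, ?_, hy⟩
      rw [hy, norm_smul, he0norm, mul_one] at hy1
      exact hy1
    · rintro ⟨α, hα, rfl⟩ n
      have hsupp : ∀ k : Fin d, k ≠ 0 → k ≠ n → (α • e0) k = 0 := by
        intro k hk0 _
        rw [hsmulk, he0k, if_neg hk0, mul_zero]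
      have hn : ‖α • e0‖ = 1 := by rw [norm_smul, he0norm, mul_one, hα]
      refine ⟨hn, ?_⟩
      rw [hnorm n, hfix n _ hsupp, hn]
end
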